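/- arXiv:0706.1022 — 4 statements merged into one kernel-verified Lean document; each statement's English description precedes it below -/
import Mathlib

section
/- Let ξ be an irrational real number and let n be a positive integer. Then there exists a positive constant c₁ (depending only on ξ and n) such that there are infinitely many algebraic numbers α of degree n over ℚ with the property that every conjugate ᾱ of α satisfies |ξ − ᾱ| ≤ c₁ H(α)^{-2/n}. -/
open Polynomial

/-- The height of an integer polynomial: the largest absolute value of its coefficients. -/
noncomputable def intPolyHeight (P : Polynomial ℤ) : ℝ :=
  ((P.support.sup fun k => (P.coeff k).natAbs : ℕ) : ℝ)

/-- The `k`-th divided derivative of a real polynomial at `ξ`, i.e. the coefficient of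
`(T - ξ)^k` in the Taylor expansion of `P` at `ξ`. -/
noncomputable def divDeriv (ξ : ℝ) (P : Polynomial ℝ) (k : ℕ) : ℝ :=
  (Polynomial.taylor ξ P).coeff k

/-- The `k`-th divided derivative at `ξ` of an integer polynomial, viewed over `ℝ`. -/
noncomputable def divDerivZ (ξ : ℝ) (P : Polynomial ℤ) (k : ℕ) : ℝ :=
  divDeriv ξ (P.map (Int.castRingHom ℝ)) k

/-- The multiset of complex roots of an integer polynomial (the conjugates of `α`, when `P`
is the irreducible polynomial of `α`). -/
noncomputable def conjRoots (P : Polynomial ℤ) : Multiset ℂ :=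
  (P.map (Int.castRingHom ℂ)).roots

/-- `q ≥ 1` is the denominator of a convergent of the continued fraction expansion of `ξ`. -/
def IsConvergentDenom (ξ : ℝ) (q : ℕ) : Prop :=
  1 ≤ q ∧ ∃ i : ℕ, (GenContFract.of ξ).dens i = (q : ℝ)

/-!
Take a good rational approximation `p / q` of `ξ` (`|ξ - p / q| < 1 / q²`; there are infinitely
many) and complete it to a unimodular matrix: `q p' - p q' = 1` with `0 ≤ q' < q`. The polynomial
`P = 2 (qX - p)ⁿ - (q'X - p')ⁿ` has height `≪ qⁿ`. For a root `z`, `|q'z - p'| = 2^(1/n) |qz - p|`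
together with `q (q'z - p') = q' (qz - p) - 1` forces `|qz - p| ≤ 1 / ((2^(1/n) - 1) q)`, so every
root lies within `≪ q⁻² ≪ H(P)^(-2/n)` of `ξ`. `P` is primitive because `qⁿ P(p / q) = ∓1`, and
irreducible because each root `z` generates a field containing the `n`-th root of `2`
`(q'z - p') / (qz - p)`, which has degree `n` by Eisenstein. Irreducible integer polynomials with a
common root agree up to sign, so the height of a root is well defined; since `H(P) ≥ qⁿ` is
unbounded, infinitely many roots occur.
-/
section Height

lemma exists_intPolyHeight_eq_abs_coeff (P : ℤ[X]) : ∃ k, intPolyHeight P = |(P.coeff k : ℝ)| := by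
  rcases P.support.eq_empty_or_nonempty with h | h
  · exact ⟨0, by simp [intPolyHeight, support_eq_empty.mp h]⟩
  · obtain ⟨k, -, hk⟩ := Finset.exists_mem_eq_sup _ h fun k => (P.coeff k).natAbs
    exact ⟨k, by rw [intPolyHeight, hk, Nat.cast_natAbs, Int.cast_abs]⟩

lemma abs_coeff_le_intPolyHeight (P : ℤ[X]) (k : ℕ) : |(P.coeff k : ℝ)| ≤ intPolyHeight P := by
  by_cases hk : k ∈ P.support
  · rw [intPolyHeight, ← Int.cast_abs, ← Nat.cast_natAbs, Nat.cast_le]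
    exact Finset.le_sup (f := fun k => (P.coeff k).natAbs) hk
  · rw [notMem_support_iff.mp hk, Int.cast_zero, abs_zero]
    exact Nat.cast_nonneg _

lemma intPolyHeight_le {P : ℤ[X]} {B : ℝ} (h : ∀ k, |(P.coeff k : ℝ)| ≤ B) :
    intPolyHeight P ≤ B := by
  obtain ⟨k, hk⟩ := exists_intPolyHeight_eq_abs_coeff P
  exact hk ▸ h k

lemma intPolyHeight_eq_of_associated {P R : ℤ[X]} (h : Associated P R) :
    intPolyHeight P = intPolyHeight R := by
  obtain ⟨u, rfl⟩ := h
  obtain ⟨a, ha, hu⟩ := Polynomial.isUnit_iff.mp u.isUnit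
  have habs : ∀ k, |((P * u).coeff k : ℝ)| = |(P.coeff k : ℝ)| := fun k => by
    rw [← hu, coeff_mul_C, Int.cast_mul, abs_mul, ← Int.cast_abs (a := a),
      Int.isUnit_iff_abs_eq.mp ha, Int.cast_one, mul_one]
  refine le_antisymm (intPolyHeight_le fun k => ?_) (intPolyHeight_le fun k => ?_)
  · exact (habs k).symm ▸ abs_coeff_le_intPolyHeight (P * u) k
  · exact habs k ▸ abs_coeff_le_intPolyHeight P k

end Height

section CommonRoot

variable {K : Type*} [Field K] [CharZero K]

lemma associated_of_irreducible_of_aeval_eq_zero {P R : ℤ[X]} (hP : Irreducible P)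
    (hR : Irreducible R) {α : K} (hPα : aeval α P = 0) (hRα : aeval α R = 0) :
    Associated P R := by
  have hminpoly : ∀ {S : ℤ[X]}, Irreducible S → aeval α S = 0 →
      S.IsPrimitive ∧ Associated (minpoly ℚ α) (S.map (Int.castRingHom ℚ)) := by
    intro S hS hSα
    have hSα' : aeval α (S.map (Int.castRingHom ℚ)) = 0 := by
      rwa [← algebraMap_int_eq, aeval_map_algebraMap]
    have hprim : S.IsPrimitive := hS.isPrimitive
      (natDegree_pos_of_aeval_root hS.ne_zero hSα
      ((injective_iff_map_eq_zero _).mp (FaithfulSMul.algebraMap_injective ℤ K))).ne'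
    have hSQ := (IsPrimitive.Int.irreducible_iff_irreducible_map_cast hprim).mp hS
    have hint : IsIntegral ℚ α := IsAlgebraic.isIntegral ⟨_, hSQ.ne_zero, hSα'⟩
    exact ⟨hprim, (minpoly.irreducible hint).associated_of_dvd hSQ (minpoly.dvd ℚ α hSα')⟩
  obtain ⟨hPprim, hPmin⟩ := hminpoly hP hPα
  obtain ⟨hRprim, hRmin⟩ := hminpoly hR hRα
  have hPR := hPmin.symm.trans hRmin
  exact associated_of_dvd_dvd
    ((IsPrimitive.Int.dvd_iff_map_cast_dvd_map_cast P R hPprim).mpr hPR.dvd)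
    ((IsPrimitive.Int.dvd_iff_map_cast_dvd_map_cast R P hRprim).mpr hPR.symm.dvd)

lemma infinite_of_forall_exists_roots_subset_of_lt_intPolyHeight [IsAlgClosed K] {S : Set K}
    (h : ∀ B : ℝ, ∃ P : ℤ[X], Irreducible P ∧ 0 < P.natDegree ∧ B < intPolyHeight P ∧
      ∀ α : K, aeval α P = 0 → α ∈ S) :
    S.Infinite := by
  intro hfin
  set heights := fun α : K => intPolyHeight '' {P : ℤ[X] | Irreducible P ∧ aeval α P = 0}
  have hsub : ∀ α, (heights α).Subsingleton := by
    rintro α - ⟨P, ⟨hP, hPα⟩, rfl⟩ - ⟨R, ⟨hR, hRα⟩, rfl⟩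
    exact intPolyHeight_eq_of_associated (associated_of_irreducible_of_aeval_eq_zero hP hR hPα hRα)
  obtain ⟨B, hB⟩ := (hfin.biUnion fun α _ => (hsub α).finite).bddAbove
  obtain ⟨P, hP, hdeg, hBP, hS⟩ := h B
  obtain ⟨α, hα⟩ := IsAlgClosed.exists_aeval_eq_zero K P (natDegree_pos_iff_degree_pos.mp hdeg).ne'
  exact hBP.not_ge (hB (Set.mem_biUnion (hS α hα) ⟨P, ⟨hP, hα⟩, rfl⟩))

end CommonRoot

section Degree

lemma isEisensteinAt_X_pow_sub_C {R : Type*} [CommRing R] [IsDomain R] {p : R} (hp : Prime p)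
    {n : ℕ} (hn : 0 < n) : (X ^ n - C p).IsEisensteinAt (Ideal.span {p}) := by
  have hdeg : (X ^ n - C p).natDegree = n := natDegree_X_pow_sub_C
  refine ⟨?_, fun {k} hk => ?_, ?_⟩
  · rw [(monic_X_pow_sub_C p hn.ne').leadingCoeff, Ideal.mem_span_singleton]
    exact hp.not_dvd_one
  · rw [hdeg] at hk
    rw [coeff_sub, coeff_X_pow, if_neg hk.ne, coeff_C, zero_sub, Ideal.neg_mem_iff]
    split_ifs
    · exact Ideal.mem_span_singleton_self p
    · exact Ideal.zero_mem _
  · rw [coeff_sub, coeff_X_pow, if_neg hn.ne, coeff_C_zero, zero_sub, Ideal.neg_mem_iff,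
      Ideal.span_singleton_pow, Ideal.mem_span_singleton, pow_two]
    exact fun h => hp.not_isUnit
      (isUnit_of_dvd_one ((mul_dvd_mul_iff_left hp.ne_zero).mp (by rwa [mul_one])))

lemma irreducible_X_pow_sub_C_two {n : ℕ} (hn : 0 < n) : Irreducible (X ^ n - C 2 : ℚ[X]) := by
  have hmonic := monic_X_pow_sub_C (2 : ℤ) hn.ne'
  have hirr := (isEisensteinAt_X_pow_sub_C Int.prime_two hn).irreducible
    ((Ideal.span_singleton_prime two_ne_zero).mpr Int.prime_two) hmonic.isPrimitive
    (natDegree_X_pow_sub_C (R := ℤ) ▸ hn)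
  have := (IsPrimitive.Int.irreducible_iff_irreducible_map_cast hmonic.isPrimitive).mp hirr
  rwa [Polynomial.map_sub, Polynomial.map_pow, map_X, map_C, eq_intCast, Int.cast_ofNat] at this

open IntermediateField in
lemma natDegree_minpoly_le_of_mem_adjoin {K L : Type*} [Field K] [Field L] [Algebra K L]
    {x y : L} (hx : IsIntegral K x) (hy : y ∈ K⟮x⟯) :
    (minpoly K y).natDegree ≤ (minpoly K x).natDegree := by
  have : FiniteDimensional K K⟮x⟯ := adjoin.finiteDimensional hx
  have hle : K⟮y⟯ ≤ K⟮x⟯ := adjoin_simple_le_iff.mpr hy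
  have hy' : IsIntegral K y := isIntegral_iff.mp (IsIntegral.of_finite K (⟨y, hy⟩ : K⟮x⟯))
  rw [← adjoin.finrank hx, ← adjoin.finrank hy']
  exact finrank_le_of_le_right hle

lemma irreducible_of_natDegree_le_natDegree_minpoly {K L : Type*} [Field K] [Field L]
    [Algebra K L] {P : K[X]} (hP : P ≠ 0) {x : L} (hx : aeval x P = 0)
    (hdeg : P.natDegree ≤ (minpoly K x).natDegree) : Irreducible P :=
  (associated_of_dvd_of_natDegree_le (minpoly.dvd K x hx) hP hdeg).irreducible
    (minpoly.irreducible (IsAlgebraic.isIntegral ⟨P, hP, hx⟩))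

end Degree

lemma Polynomial.isPrimitive_of_isUnit_eval_scaleRoots {R : Type*} [CommRing R] {P : R[X]}
    {s x : R} (h : IsUnit ((scaleRoots P s).eval x)) : P.IsPrimitive := by
  intro c hc
  obtain ⟨g, hg⟩ : C c ∣ scaleRoots P s := by
    rw [C_dvd_iff_dvd_coeff] at hc ⊢
    exact fun i => coeff_scaleRoots P s i ▸ (hc i).mul_right _
  exact isUnit_of_dvd_unit ⟨g.eval x, by rw [hg, eval_mul, eval_C]⟩ h

lemma coeff_C_mul_X_add_C_pow {R : Type*} [CommSemiring R] (a b : R) (n k : ℕ) :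
    ((C a * X + C b) ^ n).coeff k = if k ≤ n then a ^ k * b ^ (n - k) * n.choose k else 0 := by
  have hterm : ∀ m, (C a * X) ^ m * C b ^ (n - m) * (n.choose m : R[X]) =
      C (a ^ m * b ^ (n - m) * n.choose m) * X ^ m := fun m => by
    rw [mul_pow, ← C_pow, ← C_pow, ← map_natCast C, C_mul, C_mul]
    ring
  simp only [add_pow, finsetSum_coeff, hterm, coeff_C_mul_X_pow]
  simp [Finset.sum_ite_eq]

lemma abs_coeff_C_mul_X_add_C_pow_le (a b : ℤ) (n k : ℕ) :
    |((C a * X + C b) ^ n).coeff k| ≤ (|a| + |b|) ^ n := by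
  rw [coeff_C_mul_X_add_C_pow]
  split_ifs with hk
  · rw [abs_mul, abs_mul, abs_pow, abs_pow, Nat.abs_cast, add_pow]
    exact Finset.single_le_sum (f := fun m => |a| ^ m * |b| ^ (n - m) * (n.choose m : ℤ))
      (fun m _ => by positivity) (Finset.mem_range.mpr (Nat.lt_succ_of_le hk))
  · rw [abs_zero]
    positivity

lemma norm_div_sub_le_of_norm_sub_eq_mul {p q p' q' : ℤ} (hq' : 0 ≤ q') (hq'q : q' < q)
    (hdet : q * p' - p * q' = 1) {ρ : ℝ} (hρ : 1 < ρ) {z : ℂ}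
    (hz : ‖(q' : ℂ) * z - p'‖ = ρ * ‖(q : ℂ) * z - p‖) :
    ‖(p / q : ℂ) - z‖ ≤ 1 / ((ρ - 1) * q ^ 2) := by
  set s := ‖(q : ℂ) * z - p‖
  have hq : (0 : ℝ) < q := by exact_mod_cast hq'.trans_lt hq'q
  have hq'R : (0 : ℝ) ≤ q' := by exact_mod_cast hq'
  have hqq' : (q' : ℝ) ≤ q := by exact_mod_cast hq'q.le
  have hid : (q : ℂ) * (q' * z - p') = q' * (q * z - p) - 1 := by
    linear_combination (-1 : ℂ) * (by exact_mod_cast hdet : (q : ℂ) * p' - p * q' = 1)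
  have hbound : q * (ρ * s) ≤ q' * s + 1 := calc
    q * (ρ * s) = ‖(q : ℂ) * (q' * z - p')‖ := by
      rw [norm_mul, hz, Complex.norm_intCast, abs_of_pos hq]
    _ = ‖(q' : ℂ) * (q * z - p) - 1‖ := by rw [hid]
    _ ≤ ‖(q' : ℂ) * (q * z - p)‖ + ‖(1 : ℂ)‖ := norm_sub_le _ _
    _ = q' * s + 1 := by rw [norm_mul, norm_one, Complex.norm_intCast, abs_of_nonneg hq'R]
  have hdist : ‖(p / q : ℂ) - z‖ = s / q := by
    have hqC : (q : ℂ) ≠ 0 := by exact_mod_cast hq.ne'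
    rw [show (p / q : ℂ) - z = -((q * z - p) / q) by field_simp; ring, norm_neg, norm_div,
      Complex.norm_intCast, abs_of_pos hq]
  have hs : 0 ≤ s := norm_nonneg _
  have hρ1 : 0 < ρ - 1 := by linarith
  have hstep : q * (ρ - 1) * s ≤ 1 := by nlinarith [mul_le_mul_of_nonneg_right hqq' hs]
  rw [hdist, div_le_div_iff₀ hq (mul_pos hρ1 (pow_pos hq 2))]
  nlinarith [mul_le_mul_of_nonneg_left hstep hq.le]

/-- For `q p' - p q' = 1`, the roots of `2 (qX - p)^n - (q'X - p')^n` are the images of the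
`n`-th roots `w` of `2` under the unimodular Möbius map `w ↦ (p w - p') / (q w - q')`. -/
noncomputable def approxPoly (n : ℕ) (p q p' q' : ℤ) : ℤ[X] :=
  C 2 * (C q * X - C p) ^ n - (C q' * X - C p') ^ n

namespace approxPoly

variable {n : ℕ} {p q p' q' : ℤ}

lemma aeval_eq {A : Type*} [CommRing A] (z : A) :
    aeval z (approxPoly n p q p' q') = 2 * (q * z - p) ^ n - (q' * z - p') ^ n := by
  simp [approxPoly, map_ofNat]

lemma aeval_eq_zero_iff {A : Type*} [CommRing A] {z : A} :
    aeval z (approxPoly n p q p' q') = 0 ↔ (q' * z - p') ^ n = 2 * (q * z - p) ^ n := by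
  rw [aeval_eq, sub_eq_zero, eq_comm]

lemma coeff_eq (k : ℕ) : (approxPoly n p q p' q').coeff k =
    2 * ((C q * X + C (-p)) ^ n).coeff k - ((C q' * X + C (-p')) ^ n).coeff k := by
  simp only [approxPoly, C_neg, ← sub_eq_add_neg, coeff_sub, coeff_C_mul]

lemma coeff_self : (approxPoly n p q p' q').coeff n = 2 * q ^ n - q' ^ n := by
  rw [coeff_eq, coeff_C_mul_X_add_C_pow, coeff_C_mul_X_add_C_pow]
  simp

lemma natDegree_eq (hq' : 0 ≤ q') (hq'q : q' < q) : (approxPoly n p q p' q').natDegree = n := by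
  have hle : (approxPoly n p q p' q').natDegree ≤ n :=
    natDegree_le_iff_coeff_eq_zero.mpr fun k hk => by
      rw [coeff_eq, coeff_C_mul_X_add_C_pow, coeff_C_mul_X_add_C_pow,
        if_neg (by exact_mod_cast hk.not_ge), if_neg (by exact_mod_cast hk.not_ge), sub_zero,
        mul_zero]
  refine le_antisymm hle (le_natDegree_of_ne_zero ?_)
  rw [coeff_self]
  have hle := pow_le_pow_left₀ hq' hq'q.le n
  have hpos := pow_pos (hq'.trans_lt hq'q) n
  omega

lemma pow_le_intPolyHeight (hq' : 0 ≤ q') (hq'q : q' < q) :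
    (q : ℝ) ^ n ≤ intPolyHeight (approxPoly n p q p' q') := by
  refine le_trans ?_ (abs_coeff_le_intPolyHeight _ n)
  rw [coeff_self, ← Int.cast_pow, ← Int.cast_abs, Int.cast_le]
  have hle := pow_le_pow_left₀ hq' hq'q.le n
  have hpos := pow_pos (hq'.trans_lt hq'q) n
  rw [abs_of_nonneg (by linarith)]
  linarith

lemma intPolyHeight_le :
    intPolyHeight (approxPoly n p q p' q') ≤
      ((2 * (|q| + |p|) ^ n + (|q'| + |p'|) ^ n : ℤ) : ℝ) := by
  refine _root_.intPolyHeight_le fun k => ?_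
  have hu := abs_coeff_C_mul_X_add_C_pow_le q (-p) n k
  have hv := abs_coeff_C_mul_X_add_C_pow_le q' (-p') n k
  rw [abs_neg] at hu hv
  rw [coeff_eq, ← Int.cast_abs, Int.cast_le]
  refine (abs_sub _ _).trans ?_
  rw [abs_mul, abs_two]
  linarith

lemma eval_scaleRoots (hn : n ≠ 0) (hq' : 0 ≤ q') (hq'q : q' < q)
    (hdet : q * p' - p * q' = 1) : (scaleRoots (approxPoly n p q p' q') q).eval p = -(-1) ^ n := by
  apply Int.cast_injective (α := ℚ)
  have hqQ : (q : ℚ) ≠ 0 := Int.cast_ne_zero.mpr (hq'.trans_lt hq'q).ne'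
  have hscale :=
    scaleRoots_eval₂_mul (Int.castRingHom ℚ) (p / q : ℚ) q (p := approxPoly n p q p' q')
  rw [eq_intCast, mul_div_cancel₀ _ hqQ, eval₂_at_intCast, ← algebraMap_int_eq, ← aeval_def,
    aeval_eq, natDegree_eq hq' hq'q, mul_div_cancel₀ _ hqQ, sub_self, zero_pow hn, mul_zero,
    zero_sub, Int.cast_id, algebraMap_int_eq, eq_intCast] at hscale
  have hdetQ : (q' : ℚ) * (p / q) - p' = -1 / q := by
    field_simp
    linear_combination (-1 : ℚ) * (by exact_mod_cast hdet : (q : ℚ) * p' - p * q' = 1)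
  rw [hscale, hdetQ, div_pow, mul_neg, mul_div_cancel₀ _ (pow_ne_zero n hqQ)]
  push_cast
  ring

lemma isPrimitive (hn : n ≠ 0) (hq' : 0 ≤ q') (hq'q : q' < q) (hdet : q * p' - p * q' = 1) :
    (approxPoly n p q p' q').IsPrimitive :=
  isPrimitive_of_isUnit_eval_scaleRoots (s := q) (x := p) <| by
    rw [eval_scaleRoots hn hq' hq'q hdet]
    exact (isUnit_neg_one.pow n).neg

open IntermediateField in
lemma le_natDegree_minpoly (hn : 0 < n) (hdet : q * p' - p * q' = 1) {L : Type*} [Field L]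
    [CharZero L] {z : L} (hz : aeval z (approxPoly n p q p' q') = 0) (hint : IsIntegral ℚ z) :
    n ≤ (minpoly ℚ z).natDegree := by
  rw [aeval_eq_zero_iff] at hz
  have hid : (q : L) * (q' * z - p') - q' * (q * z - p) = -1 := by
    linear_combination (-1 : L) * (by exact_mod_cast hdet : (q : L) * p' - p * q' = 1)
  have hqz : (q : L) * z - p ≠ 0 := by
    intro h
    rw [h, zero_pow hn.ne', mul_zero, pow_eq_zero_iff hn.ne'] at hz
    rw [hz, h, mul_zero, mul_zero, sub_zero] at hid
    exact zero_ne_one (neg_eq_zero.mp hid.symm).symm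
  set w := ((q' : L) * z - p') / (q * z - p)
  have hw : w ^ n = 2 := by rw [div_pow, hz, mul_div_cancel_right₀ _ (pow_ne_zero _ hqz)]
  have hzmem : z ∈ ℚ⟮z⟯ := mem_adjoin_simple_self ℚ z
  have hwmem : w ∈ ℚ⟮z⟯ :=
    div_mem (sub_mem (mul_mem (intCast_mem _ _) hzmem) (intCast_mem _ _))
      (sub_mem (mul_mem (intCast_mem _ _) hzmem) (intCast_mem _ _))
  have hmin : minpoly ℚ w = X ^ n - C 2 := (minpoly.eq_of_irreducible_of_monic
    (irreducible_X_pow_sub_C_two hn) (by simp [hw]) (monic_X_pow_sub_C _ hn.ne')).symm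
  calc n = (minpoly ℚ w).natDegree := by rw [hmin, natDegree_X_pow_sub_C]
    _ ≤ (minpoly ℚ z).natDegree := natDegree_minpoly_le_of_mem_adjoin hint hwmem

lemma irreducible (hn : 0 < n) (hq' : 0 ≤ q') (hq'q : q' < q) (hdet : q * p' - p * q' = 1) :
    Irreducible (approxPoly n p q p' q') := by
  set PQ := (approxPoly n p q p' q').map (Int.castRingHom ℚ)
  have hdeg : PQ.natDegree = n := by
    rw [natDegree_map_eq_of_injective Int.cast_injective, natDegree_eq hq' hq'q]
  have hPQ : PQ ≠ 0 := fun h => hn.ne' (by rw [← hdeg, h, natDegree_zero])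
  obtain ⟨z, hz⟩ := IsAlgClosed.exists_aeval_eq_zero ℂ PQ
    (by rw [degree_eq_natDegree hPQ, hdeg]; exact_mod_cast hn.ne')
  have hzP : aeval z (approxPoly n p q p' q') = 0 := by
    rw [← aeval_map_algebraMap ℚ, algebraMap_int_eq]
    exact hz
  have hdeg_le : PQ.natDegree ≤ (minpoly ℚ z).natDegree :=
    hdeg ▸ le_natDegree_minpoly hn hdet hzP (IsAlgebraic.isIntegral ⟨PQ, hPQ, hz⟩)
  exact (IsPrimitive.Int.irreducible_iff_irreducible_map_cast
    (isPrimitive hn.ne' hq' hq'q hdet)).mpr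
      (irreducible_of_natDegree_le_natDegree_minpoly hPQ hz hdeg_le)

lemma norm_sub_eq_mul_of_aeval_eq_zero (hn : n ≠ 0) {ρ : ℝ} (hρ0 : 0 ≤ ρ) (hρ : ρ ^ n = 2)
    {z : ℂ} (hz : aeval z (approxPoly n p q p' q') = 0) :
    ‖(q' : ℂ) * z - p'‖ = ρ * ‖(q : ℂ) * z - p‖ := by
  rw [aeval_eq_zero_iff] at hz
  refine (pow_left_inj₀ (norm_nonneg _) (by positivity) hn).mp ?_
  rw [← norm_pow, hz, norm_mul, mul_pow, hρ, norm_pow, Complex.norm_two]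

end approxPoly

lemma finite_setOf_den_le_abs_sub_lt (ξ : ℝ) (B : ℕ) :
    {r : ℚ | r.den ≤ B ∧ |ξ - r| < 1}.Finite := by
  refine (Set.Finite.biUnion (Set.finite_Iic B) fun d _ =>
    (Set.finite_Icc ⌊(ξ - 1) * d⌋ ⌈(ξ + 1) * d⌉).image fun m : ℤ => (m / d : ℚ)).subset ?_
  rintro r ⟨hB, hr⟩
  have hd : (0 : ℝ) < r.den := by exact_mod_cast r.pos
  have hnum : (r.num : ℝ) = r * r.den := by exact_mod_cast (Rat.mul_den_eq_num r).symm
  rw [abs_sub_lt_iff] at hr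
  refine Set.mem_biUnion (x := r.den) hB ⟨r.num, ⟨?_, ?_⟩, Rat.num_div_den r⟩
  · exact Int.floor_le_iff.mpr (by rw [hnum]; nlinarith)
  · exact Int.le_ceil_iff.mpr (by rw [hnum]; nlinarith)

lemma exists_rat_abs_sub_lt_one_div_den_sq_and_lt_den {ξ : ℝ} (hξ : Irrational ξ) (B : ℕ) :
    ∃ r : ℚ, |ξ - r| < 1 / (r.den : ℝ) ^ 2 ∧ B < r.den := by
  by_contra! h
  refine Real.infinite_rat_abs_sub_lt_one_div_den_sq_of_irrational hξ
    ((finite_setOf_den_le_abs_sub_lt ξ B).subset fun r hr => ⟨h r hr, hr.trans_le ?_⟩)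
  rw [div_le_one (by positivity)]
  exact one_le_pow₀ (by exact_mod_cast r.pos)

lemma exists_mul_sub_mul_eq_one {p q : ℤ} (hq : 0 < q) (h : IsCoprime q p) :
    ∃ p' q' : ℤ, 0 ≤ q' ∧ q' < q ∧ q * p' - p * q' = 1 := by
  obtain ⟨a, b, hab⟩ := h
  refine ⟨a - p * (-b / q), -b % q, Int.emod_nonneg _ hq.ne', Int.emod_lt_of_pos _ hq, ?_⟩
  rw [Int.emod_def]
  linear_combination hab

lemma aeval_eq_zero_of_mem_conjRoots {P : ℤ[X]} {z : ℂ} (hz : z ∈ conjRoots P) :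
    aeval z P = 0 := by
  rw [aeval_def, algebraMap_int_eq, ← eval_map]
  exact (mem_roots'.mp hz).2

lemma intPolyHeight_approxPoly_le {ξ : ℝ} {n : ℕ} {r : ℚ} (hr : |ξ - r| < 1) {p' q' : ℤ}
    (hq' : 0 ≤ q') (hq'q : q' < r.den) (hdet : r.den * p' - r.num * q' = 1) :
    intPolyHeight (approxPoly n r.num r.den p' q') ≤ 3 * (|ξ| + 3) ^ n * (r.den : ℝ) ^ n := by
  have hq : (1 : ℝ) ≤ r.den := by exact_mod_cast r.pos
  have hq'R : 0 ≤ (q' : ℝ) := by exact_mod_cast hq'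
  have hq'q' : (q' : ℝ) ≤ r.den := by exact_mod_cast hq'q.le
  have hp : |(r.num : ℝ)| ≤ (|ξ| + 1) * r.den := by
    rw [show (r.num : ℝ) = r * r.den by exact_mod_cast (Rat.mul_den_eq_num r).symm, abs_mul,
      Nat.abs_cast]
    have := abs_sub_abs_le_abs_sub (r : ℝ) ξ
    rw [abs_sub_comm] at hr
    gcongr
    linarith
  have hp' : (r.den : ℝ) * |(p' : ℝ)| ≤ 1 + |(r.num : ℝ)| * r.den := by
    have hdetR : ((r.den * p' - r.num * q' : ℤ) : ℝ) = 1 := by exact_mod_cast hdet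
    push_cast at hdetR
    rw [← Nat.abs_cast, ← abs_mul, show (r.den : ℝ) * p' = 1 + r.num * q' by linarith]
    refine (abs_add_le _ _).trans ?_
    rw [abs_one, abs_mul, abs_of_nonneg hq'R, Nat.abs_cast]
    gcongr
  have hu : |(r.den : ℝ)| + |(r.num : ℝ)| ≤ (|ξ| + 3) * r.den := by
    rw [Nat.abs_cast]
    linarith [abs_nonneg ξ]
  have hv : |(q' : ℝ)| + |(p' : ℝ)| ≤ (|ξ| + 3) * r.den := by
    rw [abs_of_nonneg hq'R]
    nlinarith [abs_nonneg ξ, abs_nonneg (p' : ℝ)]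
  refine approxPoly.intPolyHeight_le.trans ?_
  push_cast
  calc 2 * (|(r.den : ℝ)| + |(r.num : ℝ)|) ^ n + (|(q' : ℝ)| + |(p' : ℝ)|) ^ n
      ≤ 2 * ((|ξ| + 3) * r.den) ^ n + ((|ξ| + 3) * r.den) ^ n := by gcongr
    _ = 3 * (|ξ| + 3) ^ n * r.den ^ n := by rw [mul_pow]; ring

lemma one_div_sq_le_rpow_of_le_mul_pow {n : ℕ} (hn : 0 < n) {Q H c : ℝ} (hQ : 0 < Q)
    (hH : 0 < H) (h : H ≤ c * Q ^ n) : 1 / Q ^ 2 ≤ c ^ (2 / (n : ℝ)) * H ^ (-2 / (n : ℝ)) := by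
  have hc : 0 < c := pos_of_mul_pos_left (hH.trans_le h) (pow_pos hQ n).le
  have hpow : (Q ^ n) ^ (2 / (n : ℝ)) = Q ^ 2 := by
    rw [← Real.rpow_natCast, ← Real.rpow_mul hQ.le, mul_div_cancel₀ _ (by exact_mod_cast hn.ne'),
      Real.rpow_two]
  have hmono : H ^ (2 / (n : ℝ)) ≤ c ^ (2 / (n : ℝ)) * Q ^ 2 := by
    rw [← hpow, ← Real.mul_rpow hc.le (by positivity)]
    exact Real.rpow_le_rpow hH.le h (by positivity)
  rw [neg_div, Real.rpow_neg hH.le, ← div_eq_mul_inv, div_le_div_iff₀ (by positivity)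
    (by positivity), one_mul]
  exact hmono

lemma exists_irreducible_of_abs_sub_lt_one_div_den_sq {ξ : ℝ} {n : ℕ} (hn : 0 < n) {ρ : ℝ}
    (hρ1 : 1 < ρ) (hρ : ρ ^ n = 2) {r : ℚ} (hr : |ξ - r| < 1 / (r.den : ℝ) ^ 2) :
    ∃ P : ℤ[X], Irreducible P ∧ P.natDegree = n ∧ (r.den : ℝ) ^ n ≤ intPolyHeight P ∧
      intPolyHeight P ≤ 3 * (|ξ| + 3) ^ n * (r.den : ℝ) ^ n ∧
      ∀ z ∈ conjRoots P, ‖(ξ : ℂ) - z‖ ≤ ρ / (ρ - 1) / (r.den : ℝ) ^ 2 := by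
  have hq : (0 : ℤ) < r.den := by exact_mod_cast r.pos
  have hcop : IsCoprime (r.den : ℤ) r.num := by
    rw [Int.isCoprime_iff_gcd_eq_one, Int.gcd_comm]
    exact r.reduced
  obtain ⟨p', q', hq', hq'q, hdet⟩ := exists_mul_sub_mul_eq_one hq hcop
  have hr1 : |ξ - r| < 1 :=
    hr.trans_le (div_le_one_of_le₀ (one_le_pow₀ (by exact_mod_cast r.pos)) (by positivity))
  refine ⟨approxPoly n r.num r.den p' q', approxPoly.irreducible hn hq' hq'q hdet,
    approxPoly.natDegree_eq hq' hq'q, by exact_mod_cast approxPoly.pow_le_intPolyHeight hq' hq'q,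
    intPolyHeight_approxPoly_le hr1 hq' hq'q hdet, fun z hz => ?_⟩
  have hz' := norm_div_sub_le_of_norm_sub_eq_mul hq' hq'q hdet hρ1
    (approxPoly.norm_sub_eq_mul_of_aeval_eq_zero hn.ne' (by linarith) hρ
      (aeval_eq_zero_of_mem_conjRoots hz))
  have hξr : ‖(ξ : ℂ) - (r.num / r.den : ℂ)‖ = |ξ - r| := by
    rw [← Complex.ofReal_intCast, ← Complex.ofReal_natCast, ← Complex.ofReal_div,
      ← Complex.ofReal_sub, Complex.norm_real, Real.norm_eq_abs, Rat.cast_def]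
  calc ‖(ξ : ℂ) - z‖ ≤ ‖(ξ : ℂ) - (r.num / r.den : ℂ)‖ + ‖(r.num / r.den : ℂ) - z‖ :=
        norm_sub_le_norm_sub_add_norm_sub _ _ _
    _ ≤ 1 / (r.den : ℝ) ^ 2 + 1 / ((ρ - 1) * (r.den : ℝ) ^ 2) := by
        rw [hξr]
        push_cast at hz'
        exact add_le_add hr.le hz'
    _ = ρ / (ρ - 1) / (r.den : ℝ) ^ 2 := by
        field_simp [(by linarith : ρ - 1 ≠ 0)]
        ring

/-- Theorem A (i): for irrational `ξ` and `n ≥ 1` there is `c₁ > 0` such that infinitely many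
algebraic numbers `α` of degree `n` satisfy `|ξ - ᾱ| ≤ c₁ H(α)^(-2/n)` for every conjugate
`ᾱ` of `α`. Here `α` is encoded by its irreducible polynomial `P ∈ ℤ[T]` of degree `n`. -/
theorem approx_by_all_conjugates_of_algebraic_number
    (ξ : ℝ) (hξ : Irrational ξ) (n : ℕ) (hn : 0 < n) :
    ∃ c₁ : ℝ, 0 < c₁ ∧
      {α : ℂ | ∃ P : Polynomial ℤ, Irreducible P ∧ P.natDegree = n ∧
        Polynomial.aeval α P = 0 ∧
        ∀ z ∈ conjRoots P,
          ‖(ξ : ℂ) - z‖ ≤ c₁ * intPolyHeight P ^ (-2 / (n : ℝ))}.Infinite := by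
  obtain ⟨ρ, hρ1, hρ⟩ : ∃ ρ : ℝ, 1 < ρ ∧ ρ ^ n = 2 :=
    ⟨2 ^ (n : ℝ)⁻¹, Real.one_lt_rpow one_lt_two (by positivity),
      Real.rpow_inv_natCast_pow zero_le_two hn.ne'⟩
  refine ⟨ρ / (ρ - 1) * (3 * (|ξ| + 3) ^ n) ^ (2 / (n : ℝ)), by positivity, ?_⟩
  refine infinite_of_forall_exists_roots_subset_of_lt_intPolyHeight fun B => ?_
  obtain ⟨r, hr, hBr⟩ := exists_rat_abs_sub_lt_one_div_den_sq_and_lt_den hξ ⌈B⌉₊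
  obtain ⟨P, hirr, hdeg, hlow, hup, hroots⟩ :=
    exists_irreducible_of_abs_sub_lt_one_div_den_sq hn hρ1 hρ hr
  have hden : (1 : ℝ) ≤ r.den := by exact_mod_cast r.pos
  have hdenH : (r.den : ℝ) ≤ intPolyHeight P := (le_self_pow₀ hden hn.ne').trans hlow
  refine ⟨P, hirr, hdeg ▸ hn, ?_, fun α hα => ⟨P, hirr, hdeg, hα, fun z hz => ?_⟩⟩
  · calc B ≤ ⌈B⌉₊ := Nat.le_ceil B
      _ < r.den := by exact_mod_cast hBr
      _ ≤ intPolyHeight P := hdenH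
  · refine (hroots z hz).trans ?_
    rw [mul_assoc, div_eq_mul_one_div (ρ / (ρ - 1))]
    gcongr
    exact one_div_sq_le_rpow_of_le_mul_pow hn (by positivity) (by linarith) hup
end

section
/- Let ξ be a rational number and let n be a positive integer. There exists a constant c > 0 (depending only on ξ and n) such that for every algebraic integer α of degree n+1 over ℚ with α ≠ ξ, one has max_{ᾱ ≠ α} |ξ − ᾱ| ≥ c · H(α)^{-1/n}, where the maximum is over all conjugates ᾱ of α different from α itself. -/
/-! `P` is irreducible over `ℚ` of degree `n + 1 ≥ 2`, so `P(ξ) ≠ 0`; as `den(ξ)^(n+1) P(ξ)` is an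
integer, `|P(ξ)| ≥ den(ξ)^-(n+1)`. On the other hand `|P(ξ)| = ∏ |ξ - ᾱ|` over all conjugates, and by
Cauchy's root bound the factor `|ξ - α|` is at most `(|ξ| + 2) H(α)`. Hence the largest of the
remaining `n` factors is at least `(c / H(α))^(1/n)` with `c = den(ξ)^-(n+1) (|ξ| + 2)^-1`. -/

open Polynomial

lemma natAbs_coeff_le_intPolyHeight (P : ℤ[X]) (k : ℕ) :
    ((P.coeff k).natAbs : ℝ) ≤ intPolyHeight P := by
  unfold intPolyHeight
  by_cases h : P.coeff k = 0
  · simp [h]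
  · exact_mod_cast Finset.le_sup (f := fun k => (P.coeff k).natAbs) (mem_support_iff.mpr h)

lemma one_le_intPolyHeight {P : ℤ[X]} (hP : P ≠ 0) : 1 ≤ intPolyHeight P :=
  le_trans (Nat.one_le_cast.mpr (Int.natAbs_pos.mpr (leadingCoeff_ne_zero.mpr hP)))
    (natAbs_coeff_le_intPolyHeight P P.natDegree)

lemma norm_le_intPolyHeight_add_one {P : ℤ[X]} (hm : P.Monic) {z : ℂ} (hz : aeval z P = 0) :
    ‖z‖ ≤ intPolyHeight P + 1 := by
  set f := P.map (Int.castRingHom ℂ)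
  have hH : 0 ≤ intPolyHeight P := zero_le_one.trans (one_le_intPolyHeight hm.ne_zero)
  have hcoeff : (Finset.range f.natDegree).sup (‖f.coeff ·‖₊) ≤ (intPolyHeight P).toNNReal :=
    Finset.sup_le fun i _ => by
      rw [← NNReal.coe_le_coe, coe_nnnorm, Real.coe_toNNReal _ hH]
      simpa [f] using natAbs_coeff_le_intPolyHeight P i
  have hlt := IsRoot.norm_lt_cauchyBound (hm.map _).ne_zero (a := z)
    (by rwa [IsRoot, eval_map, ← aeval_def])
  rw [cauchyBound, (hm.map _).leadingCoeff, nnnorm_one, div_one] at hlt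
  have := hlt.le.trans (add_le_add_left hcoeff 1)
  rw [← NNReal.coe_le_coe] at this
  simpa [Real.coe_toNNReal _ hH] using this

lemma norm_sub_le_of_aeval_eq_zero {P : ℤ[X]} (hm : P.Monic) (x : ℂ) {z : ℂ}
    (hz : aeval z P = 0) : ‖x - z‖ ≤ (‖x‖ + 2) * intPolyHeight P := by
  have hH := one_le_intPolyHeight hm.ne_zero
  have hz := norm_le_intPolyHeight_add_one hm hz
  calc ‖x - z‖ ≤ ‖x‖ + ‖z‖ := norm_sub_le _ _
    _ ≤ (‖x‖ + 2) * intPolyHeight P := by nlinarith [norm_nonneg x]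

lemma one_le_den_pow_mul_abs_aeval (P : ℤ[X]) {ξ : ℚ} (h : aeval ξ P ≠ 0) :
    1 ≤ (ξ.den : ℚ) ^ P.natDegree * |aeval ξ P| := by
  -- `scaleRoots` homogenizes: its value at `num` is `∑ aᵢ numⁱ den^(d-i) = den^d P(num / den)`.
  have key : (((P.scaleRoots (ξ.den : ℤ)).eval ξ.num : ℤ) : ℚ) =
      (ξ.den : ℚ) ^ P.natDegree * aeval ξ P := by
    simpa [aeval_def, Rat.den_mul_eq_num, eval₂_at_intCast] using
      scaleRoots_eval₂_mul (p := P) (Int.castRingHom ℚ) ξ (ξ.den : ℤ)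
  have hne : (P.scaleRoots (ξ.den : ℤ)).eval ξ.num ≠ 0 := by
    rw [← Int.cast_ne_zero (α := ℚ), key]
    exact mul_ne_zero (by positivity) h
  rw [← abs_of_pos (by positivity : (0 : ℚ) < (ξ.den : ℚ) ^ P.natDegree), ← abs_mul, ← key,
    ← Int.cast_abs]
  exact_mod_cast Int.one_le_abs hne

lemma aeval_ne_zero_of_irreducible {P : ℤ[X]} (hP : P.IsPrimitive) (hirr : Irreducible P)
    (hdeg : P.natDegree ≠ 1) (ξ : ℚ) : aeval ξ P ≠ 0 := by
  have hirrQ := (IsPrimitive.Int.irreducible_iff_irreducible_map_cast hP).mp hirr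
  rw [aeval_def, ← eval_map]
  exact hirrQ.not_isRoot_of_natDegree_ne_one
    (by rwa [natDegree_map_eq_of_injective Int.cast_injective])

lemma separable_map_of_irreducible (K : Type*) [Field K] [CharZero K] {P : ℤ[X]}
    (hP : P.IsPrimitive) (hirr : Irreducible P) : (P.map (Int.castRingHom K)).Separable := by
  have hsep := ((IsPrimitive.Int.irreducible_iff_irreducible_map_cast hP).mp hirr).separable
  have hcomp : (Rat.castHom K).comp (Int.castRingHom ℚ) = Int.castRingHom K := RingHom.ext_int _ _
  simpa [map_map, hcomp] using hsep.map (f := Rat.castHom K)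

lemma Polynomial.exists_root_ne_norm_eval_le {K : Type*} [NormedField K] {f : K[X]}
    (hf : f.Splits) (hm : f.Monic) (hnd : f.roots.Nodup) {α : K} (hα : α ∈ f.roots) {n : ℕ}
    (hdeg : f.natDegree = n + 1) (hn : n ≠ 0) (x : K) :
    ∃ z ∈ f.roots, z ≠ α ∧ ‖f.eval x‖ ≤ ‖x - α‖ * ‖x - z‖ ^ n := by
  classical
  set T := f.roots.erase α
  have hT : Multiset.card T = n := by
    rw [Multiset.card_erase_of_mem hα, ← hf.natDegree_eq_card_roots, hdeg]; rfl
  obtain ⟨z, hzT, hmax⟩ := T.toFinset.exists_max_image (‖x - ·‖)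
    (by rw [Multiset.toFinset_nonempty, ← Multiset.card_pos, hT]; omega)
  rw [Multiset.mem_toFinset] at hzT
  refine ⟨z, Multiset.mem_of_mem_erase hzT, (hnd.mem_erase_iff.mp hzT).1, ?_⟩
  rw [hf.eval_eq_prod_roots_of_monic hm, ← Multiset.cons_erase hα, Multiset.map_cons,
    Multiset.prod_cons, norm_mul]
  gcongr
  calc ‖(T.map (x - ·)).prod‖ = (T.map (‖x - ·‖)).prod := by
        simpa [Multiset.map_map] using map_multiset_prod (normHom (α := K)) (T.map (x - ·))
    _ ≤ (T.map fun _ => ‖x - z‖).prod :=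
        Multiset.prod_map_le_prod_map₀ _ _ (fun _ _ => norm_nonneg _)
          fun w hw => hmax w (Multiset.mem_toFinset.mpr hw)
    _ = ‖x - z‖ ^ n := by rw [Multiset.map_const', Multiset.prod_replicate, hT]

lemma rpow_one_div_mul_rpow_neg_one_div_le {c H M : ℝ} {n : ℕ} (hc : 0 ≤ c) (hH : 0 ≤ H)
    (hM : 0 ≤ M) (hn : n ≠ 0) (h : c / H ≤ M ^ n) :
    c ^ (1 / (n : ℝ)) * H ^ (-1 / (n : ℝ)) ≤ M := by
  rw [neg_div, Real.rpow_neg hH, ← div_eq_mul_inv, ← Real.div_rpow hc hH, one_div,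
    Real.rpow_inv_le_iff_of_pos (div_nonneg hc hH) hM (by positivity), Real.rpow_natCast]
  exact h

lemma exists_conjRoots_ne_one_le_den_pow_mul_height_mul_pow {P : ℤ[X]} (hm : P.Monic)
    (hirr : Irreducible P) {n : ℕ} (hn : n ≠ 0) (hdeg : P.natDegree = n + 1) {α : ℂ}
    (hα : aeval α P = 0) (ξ : ℚ) :
    ∃ z ∈ conjRoots P, z ≠ α ∧
      1 ≤ (ξ.den : ℝ) ^ (n + 1) * (‖(ξ : ℂ)‖ + 2) * intPolyHeight P * ‖(ξ : ℂ) - z‖ ^ n := by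
  set f := P.map (Int.castRingHom ℂ)
  have hfm : f.Monic := hm.map _
  have hfdeg : f.natDegree = n + 1 := by
    rw [natDegree_map_eq_of_injective (RingHom.injective_int _), hdeg]
  have hf : ∀ x, f.eval x = aeval x P := fun x => by
    rw [← eval_map_algebraMap, algebraMap_int_eq]
  have hαf : α ∈ f.roots := (mem_roots hfm.ne_zero).mpr (by rwa [IsRoot, hf])
  obtain ⟨z, hz, hzα, hle⟩ := exists_root_ne_norm_eval_le (IsAlgClosed.splits f) hfm
    (nodup_roots (separable_map_of_irreducible ℂ hm.isPrimitive hirr)) hαf hfdeg hn ξ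
  refine ⟨z, hz, hzα, ?_⟩
  have hval : 1 ≤ (ξ.den : ℝ) ^ (n + 1) * ‖f.eval (ξ : ℂ)‖ := by
    have h := one_le_den_pow_mul_abs_aeval P
      (aeval_ne_zero_of_irreducible hm.isPrimitive hirr (by omega) ξ)
    rw [hdeg] at h
    rw [hf, ← eq_ratCast (algebraMap ℚ ℂ), aeval_algebraMap_apply,
      eq_ratCast, Complex.norm_ratCast]
    exact_mod_cast h
  calc 1 ≤ (ξ.den : ℝ) ^ (n + 1) * ‖f.eval (ξ : ℂ)‖ := hval
    _ ≤ (ξ.den : ℝ) ^ (n + 1) * (‖(ξ : ℂ) - α‖ * ‖(ξ : ℂ) - z‖ ^ n) := by gcongr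
    _ ≤ (ξ.den : ℝ) ^ (n + 1) * ((‖(ξ : ℂ)‖ + 2) * intPolyHeight P * ‖(ξ : ℂ) - z‖ ^ n) := by
      gcongr; exact norm_sub_le_of_aeval_eq_zero hm _ hα
    _ = _ := by ring

/-- Rational `ξ`, algebraic integers: there is `c > 0` such that for every algebraic integer
`α ≠ ξ` of degree `n+1` (encoded by its monic irreducible polynomial `P ∈ ℤ[T]`), some
conjugate `z ≠ α` satisfies `|ξ - z| ≥ c H(α)^(-1/n)`. -/
theorem rational_xi_algebraic_integer_lower_bound
    (ξ : ℚ) (n : ℕ) (hn : 0 < n) :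
    ∃ c : ℝ, 0 < c ∧
      ∀ (P : Polynomial ℤ) (α : ℂ), P.Monic → Irreducible P → P.natDegree = n + 1 →
        Polynomial.aeval α P = 0 → α ≠ (ξ : ℂ) →
        ∃ z ∈ conjRoots P, z ≠ α ∧
          c * intPolyHeight P ^ (-1 / (n : ℝ)) ≤ ‖(ξ : ℂ) - z‖ := by
  set K : ℝ := (ξ.den : ℝ) ^ (n + 1) * (‖(ξ : ℂ)‖ + 2)
  refine ⟨(1 / K) ^ (1 / (n : ℝ)), by positivity, fun P α hm hirr hdeg hα _ => ?_⟩
  obtain ⟨z, hz, hzα, hle⟩ :=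
    exists_conjRoots_ne_one_le_den_pow_mul_height_mul_pow hm hirr hn.ne' hdeg hα ξ
  have hH : 0 < intPolyHeight P := zero_lt_one.trans_le (one_le_intPolyHeight hm.ne_zero)
  refine ⟨z, hz, hzα, rpow_one_div_mul_rpow_neg_one_div_le (by positivity) hH.le
    (norm_nonneg _) hn.ne' ?_⟩
  rw [div_div, div_le_iff₀ (by positivity)]
  linarith
end

section
/- Let ξ be an irrational real number, let n be a positive integer, and let q ≥ 1 be the denominator of a convergent of the continued fraction expansion of ξ. Then there exist polynomials P₀, P₁, …, Pₙ with integer coefficients and degree at most n which form a ℤ-basis of the group of integer polynomials of degree at most n, and which satisfy |P_j^{[k]}(ξ)| ≤ 2ⁿ q^{2k−n} for all 0 ≤ j, k ≤ n. -/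
open Polynomial

/-!
Let `p/q` be the given convergent and `p'/q'` the preceding one (`1/0` for the zeroth), so that
`q' ≤ q`, `q p' - p q' = ±1` and `|qξ - p|, |q'ξ - p'| ≤ 1/q`. Take
`P_j = (qX - p)^j (q'X - p')^(n-j)`. As `(X, 1) ↦ (qX - p, q'X - p')` is unimodular,
`X^k = X^k · 1^(n-k)` lies in the `ℤ`-span of the `P_j`, so these `n + 1` polynomials span, hence
form a basis of, the free module of integer polynomials of degree `≤ n`. At `ξ` the Taylor
expansion of `P_j` is `(qT + (qξ - p))^j (q'T + (q'ξ - p'))^(n-j)`, whose coefficients are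
dominated by those of `(qT + 1/q)^n`, namely `C(n, k) q^(2k-n) ≤ 2^n q^(2k-n)`.
-/

open Submodule

namespace GenContFract

variable {K : Type*} [Field K] [LinearOrder K] [FloorRing K]

theorem exists_int_eq_of_contsAux (v : K) (m : ℕ) :
    ∃ a b : ℤ, (GenContFract.of v).contsAux m = ⟨a, b⟩ := by
  induction m using Nat.twoStepInduction with
  | zero => exact ⟨1, 0, by simp [contsAux]⟩
  | one => exact ⟨⌊v⌋, 1, by simp [contsAux, of_h_eq_floor]⟩
  | more m ih₀ ih₁ =>
    obtain ⟨a₀, b₀, h₀⟩ := ih₀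
    obtain ⟨a₁, b₁, h₁⟩ := ih₁
    cases hs : (GenContFract.of v).s.get? m with
    | none => exact ⟨a₁, b₁, (contsAux_stable_step_of_terminated hs).trans h₁⟩
    | some gp =>
      obtain ⟨ha, z, hz⟩ := of_partNum_eq_one_and_exists_int_partDen_eq hs
      refine ⟨z * a₁ + a₀, z * b₁ + b₀, ?_⟩
      rw [contsAux_recurrence hs h₀ h₁, ha, hz]
      congr 1 <;> push_cast <;> ring

theorem exists_int_eq_of_num (v : K) (m : ℕ) : ∃ a : ℤ, (GenContFract.of v).nums m = a := by
  obtain ⟨a, _, h⟩ := exists_int_eq_of_contsAux v (m + 1)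
  exact ⟨a, by rw [num_eq_conts_a, nth_cont_eq_succ_nth_contAux, h]⟩

variable [IsStrictOrderedRing K]

theorem exists_nat_eq_of_den (v : K) (m : ℕ) : ∃ b : ℕ, (GenContFract.of v).dens m = b := by
  obtain ⟨_, b, h⟩ := exists_int_eq_of_contsAux v (m + 1)
  have hb : (GenContFract.of v).dens m = b := by
    rw [den_eq_conts_b, nth_cont_eq_succ_nth_contAux, h]
  have hb₀ : 0 ≤ b := by exact_mod_cast hb ▸ zero_le_of_den
  exact ⟨b.toNat, by rw [hb, ← Int.cast_natCast, Int.toNat_of_nonneg hb₀]⟩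

theorem one_le_of_den (v : K) (m : ℕ) : 1 ≤ (GenContFract.of v).dens m :=
  (zeroth_den_eq_one (g := GenContFract.of v)).symm.le.trans
    (monotone_nat_of_le_succ (f := (GenContFract.of v).dens) (fun _ ↦ of_den_mono) m.zero_le)

theorem not_terminatedAt_of_irrational {ξ : ℝ} (hξ : Irrational ξ) (m : ℕ) :
    ¬(GenContFract.of ξ).TerminatedAt m := fun h ↦ by
  obtain ⟨r, hr⟩ := (terminates_iff_rat ξ).1 ⟨m, h⟩
  exact hξ ⟨r, hr.symm⟩

theorem abs_dens_mul_sub_nums_le {ξ : ℝ} (hξ : Irrational ξ) (m : ℕ) :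
    |(GenContFract.of ξ).dens m * ξ - (GenContFract.of ξ).nums m| ≤
      ((GenContFract.of ξ).dens (m + 1))⁻¹ := by
  set g := GenContFract.of ξ
  have hpos : 0 < g.dens m := zero_lt_one.trans_le (one_le_of_den ξ m)
  have h := abs_sub_convs_le (not_terminatedAt_of_irrational hξ m)
  rw [conv_eq_num_div_den] at h
  calc |g.dens m * ξ - g.nums m| = g.dens m * |ξ - g.nums m / g.dens m| := by
        rw [← abs_of_pos hpos, ← abs_mul, abs_of_pos hpos, mul_sub,
          mul_div_cancel₀ _ hpos.ne']
    _ ≤ g.dens m * (1 / (g.dens m * g.dens (m + 1))) := by gcongr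
    _ = (g.dens (m + 1))⁻¹ := by field_simp

end GenContFract

open GenContFract in
theorem IsConvergentDenom.exists_unimodular_approximations {ξ : ℝ} {q : ℕ}
    (hξ : Irrational ξ) (hq : IsConvergentDenom ξ q) :
    ∃ (p p' : ℤ) (q' : ℕ), q' ≤ q ∧ IsUnit ((q : ℤ) * p' - p * q') ∧
      |q * ξ - p| ≤ (q : ℝ)⁻¹ ∧ |q' * ξ - p'| ≤ (q : ℝ)⁻¹ := by
  obtain ⟨-, i, hi⟩ := hq
  obtain ⟨p, hp⟩ := exists_int_eq_of_num ξ i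
  have hpq : |q * ξ - p| ≤ (q : ℝ)⁻¹ := by
    rw [← hi, ← hp]
    exact (abs_dens_mul_sub_nums_le hξ i).trans
      (inv_anti₀ (zero_lt_one.trans_le (one_le_of_den ξ i)) of_den_mono)
  cases i with
  | zero =>
    obtain rfl : q = 1 := by exact_mod_cast hi.symm.trans zeroth_den_eq_one
    exact ⟨p, 1, 0, Nat.zero_le _, by simp, hpq, by simp⟩
  | succ m =>
    obtain ⟨p', hp'⟩ := exists_int_eq_of_num ξ m
    obtain ⟨q', hq'⟩ := exists_nat_eq_of_den ξ m
    have hdet := SimpContFract.determinant (s := SimpContFract.of ξ)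
      (not_terminatedAt_of_irrational hξ m)
    change (GenContFract.of ξ).nums m * (GenContFract.of ξ).dens (m + 1) -
      (GenContFract.of ξ).dens m * (GenContFract.of ξ).nums (m + 1) = _ at hdet
    rw [hp', hq', hi, hp] at hdet
    have hunit : (q : ℤ) * p' - p * q' = (-1) ^ (m + 1) := by
      exact_mod_cast (by linear_combination hdet : (q : ℝ) * p' - p * q' = (-1) ^ (m + 1))
    refine ⟨p, p', q', ?_, hunit ▸ isUnit_neg_one.pow _, hpq, ?_⟩
    · have hmono := of_den_mono (v := ξ) (n := m)
      rw [hq', hi] at hmono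
      exact_mod_cast hmono
    · simpa only [hq', hp', hi] using abs_dens_mul_sub_nums_le hξ m

theorem Submodule.span_pair_pow_le {R A : Type*} [CommSemiring R] [CommSemiring A] [Algebra R A]
    (x y : A) (m : ℕ) :
    span R {x, y} ^ m ≤
      span R (Set.range fun j : Fin (m + 1) ↦ x ^ (j : ℕ) * y ^ (m - j)) := by
  induction m with
  | zero =>
    rw [pow_zero, one_eq_span, span_le, Set.singleton_subset_iff]
    exact subset_span ⟨0, by simp⟩
  | succ m ih =>
    rw [pow_succ']
    refine (mul_le_mul' le_rfl ih).trans ?_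
    rw [span_mul_span]
    refine span_mono ?_
    rintro _ ⟨u, hu, _, ⟨j, rfl⟩, rfl⟩
    rcases hu with rfl | rfl
    · refine ⟨j.succ, ?_⟩
      simp only [Fin.val_succ, Nat.add_sub_add_right, pow_succ]
      ring
    · refine ⟨j.castSucc, ?_⟩
      simp only [Fin.val_castSucc, Nat.sub_add_comm j.is_le, pow_succ]
      ring

section LinearPair

variable {R : Type*} [CommRing R] {a b c d : R}

theorem X_mem_span_linear_pair (h : IsUnit (a * d - b * c)) :
    (X : R[X]) ∈ span R {C a * X - C b, C c * X - C d} := by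
  -- `d (aX - b) - b (cX - d) = (ad - bc) X`
  have hinv : C (↑h.unit⁻¹ : R) * (C a * C d - C b * C c) = 1 := by
    rw [← C_mul, ← C_mul, ← C_sub, ← C_mul, h.val_inv_mul, C_1]
  refine mem_span_pair.2 ⟨↑h.unit⁻¹ * d, -(↑h.unit⁻¹ * b), ?_⟩
  simp only [smul_eq_C_mul, C_mul, C_neg]
  linear_combination X * hinv

theorem one_mem_span_linear_pair (h : IsUnit (a * d - b * c)) :
    (1 : R[X]) ∈ span R {C a * X - C b, C c * X - C d} := by
  -- `c (aX - b) - a (cX - d) = ad - bc`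
  have hinv : C (↑h.unit⁻¹ : R) * (C a * C d - C b * C c) = 1 := by
    rw [← C_mul, ← C_mul, ← C_sub, ← C_mul, h.val_inv_mul, C_1]
  refine mem_span_pair.2 ⟨↑h.unit⁻¹ * c, -(↑h.unit⁻¹ * a), ?_⟩
  simp only [smul_eq_C_mul, C_mul, C_neg]
  linear_combination hinv

theorem natDegree_linear_pow_mul_linear_pow_le (n : ℕ) {j : ℕ} (hj : j ≤ n) :
    ((C a * X - C b) ^ j * (C c * X - C d) ^ (n - j)).natDegree ≤ n := by
  compute_degree
  omega

theorem degreeLT_le_span_linear_pow_mul_linear_pow (h : IsUnit (a * d - b * c)) (n : ℕ) :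
    degreeLT R (n + 1) ≤
      span R (Set.range fun j : Fin (n + 1) ↦
        (C a * X - C b) ^ (j : ℕ) * (C c * X - C d) ^ (n - j)) := by
  classical
  refine le_trans ?_ (span_pair_pow_le (C a * X - C b) (C c * X - C d) n)
  rw [degreeLT_eq_span_X_pow, span_le]
  intro _ hmem
  obtain ⟨k, hk, rfl⟩ := Finset.mem_image.1 hmem
  have hX := mul_mem_mul (pow_mem_pow _ (X_mem_span_linear_pair h) k)
    (pow_mem_pow _ (one_mem_span_linear_pair h) (n - k))
  rwa [← pow_add, Nat.add_sub_cancel' (Finset.mem_range_succ_iff.1 hk), one_pow,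
    mul_one] at hX

theorem exists_basis_degreeLT_linear_pow_mul_linear_pow [Nontrivial R] (h : IsUnit (a * d - b * c))
    (n : ℕ) :
    ∃ B : Module.Basis (Fin (n + 1)) R (degreeLT R (n + 1)),
      ∀ j, (B j : R[X]) = (C a * X - C b) ^ (j : ℕ) * (C c * X - C d) ^ (n - j) := by
  let v (j : Fin (n + 1)) : degreeLT R (n + 1) :=
    ⟨_, mem_degreeLT.2 <| (degree_le_of_natDegree_le
      (natDegree_linear_pow_mul_linear_pow_le (a := a) (b := b) (c := c) (d := d) n
        j.is_le)).trans_lt (by exact_mod_cast n.lt_succ_self)⟩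
  have hspan : ⊤ ≤ span R (Set.range v) := by
    rintro x -
    have hx := degreeLT_le_span_linear_pow_mul_linear_pow h n x.2
    change x.val ∈ span R (Set.range ((degreeLT R (n + 1)).subtype ∘ v)) at hx
    rw [Set.range_comp, span_image] at hx
    obtain ⟨y, hy, hyx⟩ := mem_map.1 hx
    exact Subtype.ext hyx ▸ hy
  have hcard : Fintype.card (Fin (n + 1)) = Module.finrank R (degreeLT R (n + 1)) := by
    rw [(degreeLTEquiv R (n + 1)).finrank_eq, Module.finrank_fin_fun, Fintype.card_fin]
  exact ⟨basisOfTopLeSpanOfCardEqFinrank v hspan hcard, fun j ↦ by simp [v]⟩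

end LinearPair

section CoeffDomination

variable {R : Type*} [CommRing R] [LinearOrder R] [IsStrictOrderedRing R]

theorem abs_coeff_mul_le {F F' G G' : R[X]} (hF : ∀ k, |F.coeff k| ≤ G.coeff k)
    (hF' : ∀ k, |F'.coeff k| ≤ G'.coeff k) (k : ℕ) :
    |(F * F').coeff k| ≤ (G * G').coeff k := by
  rw [coeff_mul, coeff_mul]
  refine (Finset.abs_sum_le_sum_abs _ _).trans (Finset.sum_le_sum fun x _ ↦ ?_)
  rw [abs_mul]
  exact mul_le_mul (hF _) (hF' _) (abs_nonneg _) ((abs_nonneg _).trans (hF _))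

theorem abs_coeff_pow_le {F G : R[X]} (hF : ∀ k, |F.coeff k| ≤ G.coeff k) (m k : ℕ) :
    |(F ^ m).coeff k| ≤ (G ^ m).coeff k := by
  induction m generalizing k with
  | zero => simp only [pow_zero, coeff_one]; split_ifs <;> simp
  | succ m ih => rw [pow_succ, pow_succ]; exact abs_coeff_mul_le ih hF k

theorem abs_coeff_linear_le {a b A B : R} (ha : |a| ≤ A) (hb : |b| ≤ B) (k : ℕ) :
    |(C a * X + C b).coeff k| ≤ (C A * X + C B).coeff k := by
  rcases k with _ | _ | k <;> simp [coeff_C, ha, hb]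

end CoeffDomination

theorem taylor_C_mul_X_sub_C {R : Type*} [CommRing R] (r a b : R) :
    taylor r (C a * X - C b) = C a * X + C (a * r - b) := by
  simp only [taylor_apply, sub_comp, mul_comp, C_comp, X_comp, C_sub, C_mul]
  ring

theorem coeff_C_mul_X_add_C_inv_pow {Q : ℝ} (hQ : 0 < Q) {n k : ℕ} (hk : k ≤ n) :
    ((C Q * X + C Q⁻¹) ^ n).coeff k = n.choose k * Q ^ (2 * (k : ℝ) - n) := by
  have hlin : C Q * X + C Q⁻¹ = C Q * (X + C (Q⁻¹ * Q⁻¹)) := by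
    rw [mul_add, ← C_mul, mul_inv_cancel_left₀ hQ.ne']
  rw [hlin, mul_pow, ← C_pow, coeff_C_mul, coeff_X_add_C_pow, sub_eq_add_neg, Real.rpow_add hQ,
    show 2 * (k : ℝ) = (2 * k : ℕ) by push_cast; ring, Real.rpow_natCast, Real.rpow_neg hQ.le,
    Real.rpow_natCast]
  obtain ⟨m, rfl⟩ := Nat.exists_eq_add_of_le hk
  have hinv : (Q * Q⁻¹) ^ (2 * m) = 1 := by rw [mul_inv_cancel₀ hQ.ne', one_pow]
  rw [Nat.add_sub_cancel_left]
  field_simp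
  linear_combination (Q ^ (k * 2) * ((k + m).choose k : ℝ)) * hinv

theorem abs_coeff_linear_pow_mul_linear_pow_le {Q a b c d : ℝ} (hQ : 0 < Q) (ha : |a| ≤ Q)
    (hb : |b| ≤ Q⁻¹) (hc : |c| ≤ Q) (hd : |d| ≤ Q⁻¹) {j n k : ℕ} (hj : j ≤ n)
    (hk : k ≤ n) :
    |((C a * X + C b) ^ j * (C c * X + C d) ^ (n - j)).coeff k| ≤
      2 ^ n * Q ^ (2 * (k : ℝ) - n) := by
  calc _ ≤ ((C Q * X + C Q⁻¹) ^ j * (C Q * X + C Q⁻¹) ^ (n - j)).coeff k :=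
        abs_coeff_mul_le (abs_coeff_pow_le (abs_coeff_linear_le ha hb) j)
          (abs_coeff_pow_le (abs_coeff_linear_le hc hd) (n - j)) k
    _ = n.choose k * Q ^ (2 * (k : ℝ) - n) := by
        rw [← pow_add, Nat.add_sub_cancel' hj, coeff_C_mul_X_add_C_inv_pow hQ hk]
    _ ≤ 2 ^ n * Q ^ (2 * (k : ℝ) - n) := by
        gcongr
        exact_mod_cast Nat.choose_le_two_pow n k

theorem basis_of_small_polynomials_general
    (ξ : ℝ) (hξ : Irrational ξ) (n : ℕ) (q : ℕ)
    (hq : IsConvergentDenom ξ q) :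
    ∃ P : Fin (n + 1) → Polynomial ℤ,
      (∀ j, (P j).natDegree ≤ n) ∧
      (∃ B : Module.Basis (Fin (n + 1)) ℤ (Polynomial.degreeLT ℤ (n + 1)),
        ∀ j, (B j : Polynomial ℤ) = P j) ∧
      ∀ j, ∀ k ≤ n, |divDerivZ ξ (P j) k| ≤ 2 ^ n * (q : ℝ) ^ (2 * (k : ℝ) - n) := by
  obtain ⟨p, p', q', hq'q, hunit, hp, hp'⟩ := hq.exists_unimodular_approximations hξ
  have hQ : (0 : ℝ) < q := by exact_mod_cast hq.1
  obtain ⟨B, hB⟩ := exists_basis_degreeLT_linear_pow_mul_linear_pow hunit n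
  refine ⟨fun j ↦ (C (q : ℤ) * X - C p) ^ (j : ℕ) * (C (q' : ℤ) * X - C p') ^ (n - j),
    fun j ↦ natDegree_linear_pow_mul_linear_pow_le n j.is_le, ⟨B, hB⟩, fun j k hk ↦ ?_⟩
  rw [divDerivZ, divDeriv]
  simp only [Polynomial.map_mul, Polynomial.map_pow, Polynomial.map_sub, Polynomial.map_C,
    Polynomial.map_X, Int.coe_castRingHom, Int.cast_natCast, taylor_mul, taylor_pow,
    taylor_C_mul_X_sub_C]
  exact abs_coeff_linear_pow_mul_linear_pow_le hQ (by simp) hp (by simpa using hq'q) hp'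
    j.is_le hk

/-- Basis of small polynomials: if `q ≥ 1` is the denominator of a convergent of the
irrational number `ξ`, then there is a `ℤ`-basis `P₀, …, Pₙ` of the group of integer
polynomials of degree at most `n` satisfying `|P_j^{[k]}(ξ)| ≤ 2^n q^(2k-n)` for all
`0 ≤ j, k ≤ n`. -/
theorem basis_of_small_polynomials
    (ξ : ℝ) (hξ : Irrational ξ) (n : ℕ) (hn : 0 < n) (q : ℕ)
    (hq : IsConvergentDenom ξ q) :
    ∃ P : Fin (n + 1) → Polynomial ℤ,
      (∀ j, (P j).natDegree ≤ n) ∧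
      (∃ B : Module.Basis (Fin (n + 1)) ℤ (Polynomial.degreeLT ℤ (n + 1)),
        ∀ j, (B j : Polynomial ℤ) = P j) ∧
      ∀ j, ∀ k ≤ n, |divDerivZ ξ (P j) k| ≤ 2 ^ n * (q : ℝ) ^ (2 * (k : ℝ) - n) :=
  basis_of_small_polynomials_general ξ hξ n q hq
end

section
/- Let ξ be an irrational real number, let n be a positive integer, let q ≥ 1 be the denominator of a convergent of the continued fraction expansion of ξ, and set c₅ = (n+1)·2^{n+1}. Then there exists a polynomial P ∈ ℤ[T] of degree n that is irreducible over ℚ and satisfies c₅ q^{2k−n} ≤ |P^{[k]}(ξ)| ≤ 3 c₅ q^{2k−n} for all 0 ≤ k ≤ n. -/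
open Polynomial

/-!
Let `p'/q'` and `p/q` be consecutive convergents of `ξ` (with `1/0` preceding the first one).
Since `q p' - p q' = ±1`, the products `(qX - p)^j (q'X - p')^(n-j)`, `0 ≤ j ≤ n`, span the
real polynomials of degree at most `n`, and since `|qξ - p|, |q'ξ - p'| ≤ 1/q`, the `k`-th
Taylor coefficient at `ξ` of each of them is at most `C(n,k) q^(2k-n)`. Let `T` be the polynomial
whose Taylor coefficients at `ξ` are `2 c₅ q^(2k-n)`, write `(T - X^n - 2)/4` in terms of them, and
round its coordinates to integers; this gives `R ∈ ℤ[X]`. Then `P = X^n + 2 + 4R` is Eisenstein at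
`2`, and its `k`-th Taylor coefficient differs from `2 c₅ q^(2k-n)` by at most
`4 (n+1) (1/2) C(n,k) q^(2k-n) ≤ c₅ q^(2k-n)`.
-/

open Finset

theorem exists_int_add_abs_le_half_of_mem_span {K M ι : Type*} [Field K] [LinearOrder K]
    [IsStrictOrderedRing K] [FloorRing K] [AddCommGroup M] [Module K M] [Fintype ι] {v : ι → M}
    {y : M} (hy : y ∈ Submodule.span K (Set.range v)) :
    ∃ (m : ι → ℤ) (e : ι → K), (∀ i, |e i| ≤ 1 / 2) ∧ y = ∑ i, ((m i : K) + e i) • v i := by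
  obtain ⟨c, rfl⟩ := (Submodule.mem_span_range_iff_exists_fun K).1 hy
  exact ⟨fun i => round (c i), fun i => c i - round (c i), fun i => abs_sub_round _, by simp⟩

namespace Polynomial

/-- The coefficient bound satisfied by a product of `m` linear polynomials `a X + b` with
`|a| ≤ x` and `|b| ≤ x⁻¹`. -/
def HasBinomialCoeffBound (x : ℝ) (m : ℕ) (f : ℝ[X]) : Prop :=
  ∀ k, |f.coeff k| ≤ m.choose k * x ^ (2 * (k : ℤ) - m)

variable {x : ℝ} {m l : ℕ} {f g : ℝ[X]}

theorem hasBinomialCoeffBound_one (x : ℝ) : HasBinomialCoeffBound x 0 1 := by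
  intro k
  rcases k with _ | k <;> simp [coeff_one]

theorem hasBinomialCoeffBound_C_mul_X_add_C (hx : 0 < x) {a b : ℝ} (ha : |a| ≤ x)
    (hb : |b| * x ≤ 1) : HasBinomialCoeffBound x 1 (C a * X + C b) := by
  rintro (_ | _ | k)
  · simp only [coeff_add, coeff_C_mul_X, coeff_C_zero]
    norm_num
    rwa [← le_div_iff₀ hx, one_div] at hb
  · simpa using ha
  · simp [Nat.choose_eq_zero_of_lt]

theorem HasBinomialCoeffBound.mul (hx : 0 < x) (hf : HasBinomialCoeffBound x m f)
    (hg : HasBinomialCoeffBound x l g) : HasBinomialCoeffBound x (m + l) (f * g) := by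
  intro k
  calc |(f * g).coeff k|
      ≤ ∑ ij ∈ antidiagonal k, |f.coeff ij.1| * |g.coeff ij.2| := by
        rw [coeff_mul]
        exact (abs_sum_le_sum_abs _ _).trans_eq (by simp only [abs_mul])
    _ ≤ ∑ ij ∈ antidiagonal k, m.choose ij.1 * x ^ (2 * (ij.1 : ℤ) - m) *
          (l.choose ij.2 * x ^ (2 * (ij.2 : ℤ) - l)) := by
        gcongr with ij
        · exact hf _
        · exact hg _
    _ = (m + l).choose k * x ^ (2 * (k : ℤ) - (m + l : ℕ)) := by
        rw [Nat.add_choose_eq, Nat.cast_sum, sum_mul]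
        refine sum_congr rfl fun ij hij => ?_
        rw [HasAntidiagonal.mem_antidiagonal] at hij
        rw [← hij, Nat.cast_mul, mul_mul_mul_comm, ← zpow_add₀ hx.ne']
        push_cast
        ring_nf

theorem HasBinomialCoeffBound.pow (hx : 0 < x) (hf : HasBinomialCoeffBound x m f) (e : ℕ) :
    HasBinomialCoeffBound x (m * e) (f ^ e) := by
  induction e with
  | zero => simpa using hasBinomialCoeffBound_one x
  | succ e ih => simpa [pow_succ, mul_add] using ih.mul hx hf

section HomogeneousSpan

variable {K : Type*} [Field K]

noncomputable def homogeneousSpan (L₁ L₂ : K[X]) (n : ℕ) : Submodule K K[X] :=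
  Submodule.span K (Set.range fun j : Fin (n + 1) => L₁ ^ (j : ℕ) * L₂ ^ (n - j))

variable {L₁ L₂ : K[X]} {n : ℕ}

theorem mul_mem_homogeneousSpan_succ {L g : K[X]} (hL : L ∈ Submodule.span K {L₁, L₂})
    (hg : g ∈ homogeneousSpan L₁ L₂ n) : L * g ∈ homogeneousSpan L₁ L₂ (n + 1) := by
  have mul_mem (L' : K[X]) (hL' : L' = L₁ ∨ L' = L₂) :
      homogeneousSpan L₁ L₂ n ≤
        (homogeneousSpan L₁ L₂ (n + 1)).comap (LinearMap.mulLeft K L') := by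
    refine Submodule.span_le.2 ?_
    rintro _ ⟨j, rfl⟩
    refine Submodule.subset_span ?_
    rcases hL' with rfl | rfl
    · exact ⟨j.succ, by simp [pow_succ]; ring⟩
    · refine ⟨j.castSucc, ?_⟩
      simp only [Fin.val_castSucc, LinearMap.mulLeft_apply]
      rw [Nat.sub_add_comm (Nat.lt_succ_iff.1 j.2), pow_succ]
      ring
  have : Submodule.span K {L₁, L₂} ≤
      (homogeneousSpan L₁ L₂ (n + 1)).comap (LinearMap.mulRight K g) := by
    rw [Submodule.span_le, Set.insert_subset_iff, Set.singleton_subset_iff]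
    exact ⟨mul_mem L₁ (.inl rfl) hg, mul_mem L₂ (.inr rfl) hg⟩
  exact this hL

theorem X_pow_mem_homogeneousSpan {a b c d : K} (h : a * d - b * c ≠ 0) {m : ℕ} (hm : m ≤ n) :
    X ^ m ∈ homogeneousSpan (C a * X + C b) (C c * X + C d) n := by
  set D := a * d - b * c
  have hX : X ∈ Submodule.span K {C a * X + C b, C c * X + C d} := by
    refine Submodule.mem_span_pair.2 ⟨D⁻¹ * d, -(D⁻¹ * b), ?_⟩
    calc _ = C (D⁻¹ * D) * X := by
          simp only [D, smul_eq_C_mul, map_mul, map_sub, map_neg]; ring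
      _ = X := by simp [inv_mul_cancel₀ h]
  have h1 : 1 ∈ Submodule.span K {C a * X + C b, C c * X + C d} := by
    refine Submodule.mem_span_pair.2 ⟨-(D⁻¹ * c), D⁻¹ * a, ?_⟩
    calc _ = C (D⁻¹ * D) := by
          simp only [D, smul_eq_C_mul, map_mul, map_sub, map_neg]; ring
      _ = 1 := by simp [inv_mul_cancel₀ h]
  induction n generalizing m with
  | zero => exact Submodule.subset_span ⟨0, by simp [Nat.le_zero.1 hm]⟩
  | succ n ih =>
    rcases m with _ | m
    · simpa using mul_mem_homogeneousSpan_succ h1 (ih (Nat.zero_le n))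
    · simpa [pow_succ'] using mul_mem_homogeneousSpan_succ hX (ih (Nat.succ_le_succ_iff.1 hm))

theorem degreeLE_le_homogeneousSpan {a b c d : K} (h : a * d - b * c ≠ 0) (n : ℕ) :
    degreeLE K n ≤ homogeneousSpan (C a * X + C b) (C c * X + C d) n := by
  classical
  rw [degreeLE_eq_span_X_pow, Submodule.span_le]
  simp only [coe_image, coe_range, Set.image_subset_iff]
  exact fun m hm => X_pow_mem_homogeneousSpan h (Nat.lt_succ_iff.1 hm)

end HomogeneousSpan

theorem IsEisensteinAt.irreducible_map_fraction_map {R K : Type*} [CommRing R] [IsDomain R]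
    [NormalizedGCDMonoid R] [Field K] [Algebra R K] [IsFractionRing R K] {𝓟 : Ideal R}
    {f : R[X]} (hf : f.IsEisensteinAt 𝓟) (hprime : 𝓟.IsPrime) (hdeg : 0 < f.natDegree) :
    Irreducible (f.map (algebraMap R K)) := by
  have hcoeff (k : ℕ) : f.coeff k = f.content * f.primPart.coeff k := by
    conv_lhs => rw [f.eq_C_content_mul_primPart]
    exact coeff_C_mul _
  have hcontent : f.content ∉ 𝓟 := fun h =>
    hf.leading (Ideal.mem_of_dvd _ (f.content_dvd_coeff _) h)
  have hprim : f.primPart.IsEisensteinAt 𝓟 := by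
    refine ⟨fun h => hf.leading ?_, fun {k} hk => ?_, fun h => hf.notMem ?_⟩
    · rw [leadingCoeff, hcoeff, ← natDegree_primPart]
      exact Ideal.mul_mem_left _ _ h
    · rw [natDegree_primPart] at hk
      have := hf.mem hk
      rw [hcoeff] at this
      exact (hprime.mem_or_mem this).resolve_left hcontent
    · rw [hcoeff]
      exact Ideal.mul_mem_left _ _ h
  have hirr : Irreducible (f.primPart.map (algebraMap R K)) :=
    (isPrimitive_primPart f).irreducible_iff_irreducible_map_fraction_map.1
      (hprim.irreducible hprime (isPrimitive_primPart f) (by rwa [natDegree_primPart]))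
  have hunit : IsUnit (C (algebraMap R K f.content)) := by
    refine isUnit_C.2 (IsUnit.mk0 _ ?_)
    rw [map_ne_zero_iff _ (IsFractionRing.injective R K), Ne, content_eq_zero_iff]
    rintro rfl
    simp at hdeg
  rw [f.eq_C_content_mul_primPart, Polynomial.map_mul, map_C]
  exact (irreducible_isUnit_mul hunit).2 hirr

variable {n : ℕ} {R : ℤ[X]}

theorem coeff_X_pow_add_C_two_add_C_four_mul (k : ℕ) :
    (X ^ n + C 2 + C 4 * R).coeff k =
      (if k = n then 1 else 0) + (if k = 0 then 2 else 0) + 4 * R.coeff k := by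
  rw [coeff_add, coeff_add, coeff_X_pow, coeff_C, coeff_C_mul]

theorem natDegree_X_pow_add_C_two_add_C_four_mul (hn : 0 < n) (hR : R.natDegree ≤ n) :
    (X ^ n + C 2 + C 4 * R).natDegree = n := by
  refine natDegree_eq_of_le_of_coeff_ne_zero ?_ ?_
  · refine natDegree_add_le_of_degree_le (natDegree_add_le_of_degree_le ?_ ?_) ?_
    · exact (natDegree_X_pow n).le
    · exact (natDegree_C 2).le.trans (Nat.zero_le n)
    · exact (natDegree_C_mul_le 4 R).trans hR
  · rw [coeff_X_pow_add_C_two_add_C_four_mul, if_pos rfl, if_neg hn.ne']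
    omega

theorem isEisensteinAt_X_pow_add_C_two_add_C_four_mul (hn : 0 < n) (hR : R.natDegree ≤ n) :
    (X ^ n + C 2 + C 4 * R).IsEisensteinAt (Ideal.span {2}) := by
  have hdeg := natDegree_X_pow_add_C_two_add_C_four_mul hn hR
  refine ⟨?_, fun {k} hk => ?_, ?_⟩
  · rw [leadingCoeff, hdeg, Ideal.mem_span_singleton, coeff_X_pow_add_C_two_add_C_four_mul,
      if_pos rfl, if_neg hn.ne']
    omega
  · rw [hdeg] at hk
    rw [Ideal.mem_span_singleton, coeff_X_pow_add_C_two_add_C_four_mul, if_neg hk.ne]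
    split_ifs <;> omega
  · rw [Ideal.span_singleton_pow, Ideal.mem_span_singleton, coeff_X_pow_add_C_two_add_C_four_mul,
      if_neg hn.ne, if_pos rfl]
    omega

end Polynomial

namespace GenContFract

open GenContFract (of)

variable {K : Type*} [Field K] [LinearOrder K] [FloorRing K]

theorem exists_int_eq_contsAux (v : K) (n : ℕ) : ∃ a b : ℤ, (of v).contsAux n = ⟨a, b⟩ := by
  induction n using Nat.twoStepInduction with
  | zero => exact ⟨1, 0, by simp [zeroth_contAux_eq_one_zero]⟩
  | one => exact ⟨⌊v⌋, 1, by simp [first_contAux_eq_h_one, of_h_eq_floor]⟩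
  | more n ih₀ ih₁ =>
    obtain ⟨a₀, b₀, h₀⟩ := ih₀
    obtain ⟨a₁, b₁, h₁⟩ := ih₁
    rcases hs : (of v).s.get? n with _ | gp
    · exact ⟨a₁, b₁, (contsAux_stable_step_of_terminated hs).trans h₁⟩
    · obtain ⟨ha, z, hz⟩ := of_partNum_eq_one_and_exists_int_partDen_eq hs
      refine ⟨z * a₁ + a₀, z * b₁ + b₀, ?_⟩
      rw [contsAux_recurrence hs h₀ h₁, ha, hz]
      push_cast
      ring_nf

theorem exists_int_eq_num_den (v : K) (n : ℕ) :
    ∃ a b : ℤ, (of v).nums n = a ∧ (of v).dens n = b := by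
  obtain ⟨a, b, h⟩ := exists_int_eq_contsAux v (n + 1)
  exact ⟨a, b, by rw [num_eq_conts_a, nth_cont_eq_succ_nth_contAux, h],
    by rw [den_eq_conts_b, nth_cont_eq_succ_nth_contAux, h]⟩

theorem abs_den_mul_sub_num_mul_den_succ_le [IsStrictOrderedRing K] {v : K} {n : ℕ}
    (h : ¬(of v).TerminatedAt n) :
    |(of v).dens n * v - (of v).nums n| * (of v).dens (n + 1) ≤ 1 := by
  have hpos : 0 < (of v).dens n := by
    have := succ_nth_fib_le_of_nth_den (v := v) (.inr (mt (terminated_stable (n.sub_le 1)) h))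
    exact lt_of_lt_of_le (by exact_mod_cast Nat.fib_pos.2 n.succ_pos) this
  have hpos' : 0 < (of v).dens (n + 1) := hpos.trans_le of_den_mono
  calc |(of v).dens n * v - (of v).nums n| * (of v).dens (n + 1)
      = (of v).dens n * |v - (of v).convs n| * (of v).dens (n + 1) := by
        rw [conv_eq_num_div_den, ← abs_of_pos hpos, ← abs_mul, abs_of_pos hpos, mul_sub,
          mul_div_cancel₀ _ hpos.ne']
    _ ≤ (of v).dens n * (1 / ((of v).dens n * (of v).dens (n + 1))) * (of v).dens (n + 1) := by
        gcongr
        exact abs_sub_convs_le h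
    _ = 1 := by field_simp

end GenContFract

theorem IsConvergentDenom.exists_independent_small_linear_forms {ξ : ℝ} {q : ℕ}
    (hξ : Irrational ξ) (hq : IsConvergentDenom ξ q) :
    ∃ a b c d : ℤ, |(a : ℝ)| ≤ q ∧ |(c : ℝ)| ≤ q ∧ |a * ξ + b| * q ≤ 1 ∧ |c * ξ + d| * q ≤ 1 ∧
      a * d - b * c ≠ 0 := by
  obtain ⟨-, i, hi⟩ := hq
  set g := GenContFract.of ξ
  have hnt (m : ℕ) : ¬g.TerminatedAt m := fun hm => by
    obtain ⟨r, hr⟩ := (GenContFract.terminates_iff_rat ξ).1 ⟨m, hm⟩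
    exact hξ ⟨r, hr.symm⟩
  rcases i with _ | j
  · rw [GenContFract.zeroth_den_eq_one] at hi
    refine ⟨1, -⌊ξ⌋, 0, 1, by simp [← hi], by simp, ?_, by simp [← hi], by simp⟩
    rw [← hi, Int.cast_one, one_mul, mul_one, Int.cast_neg, ← sub_eq_add_neg, Int.self_sub_floor,
      Int.abs_fract]
    exact (Int.fract_lt_one ξ).le
  · obtain ⟨p, q₁, hp, hq₁⟩ := GenContFract.exists_int_eq_num_den ξ (j + 1)
    obtain ⟨p₀, q₀, hp₀, hq₀⟩ := GenContFract.exists_int_eq_num_den ξ j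
    have hdet : g.nums j * g.dens (j + 1) - g.dens j * g.nums (j + 1) = (-1) ^ (j + 1) :=
      SimpContFract.determinant (s := SimpContFract.of ξ) (hnt j)
    have hj₀ := GenContFract.abs_den_mul_sub_num_mul_den_succ_le (hnt j)
    have hj₁ := GenContFract.abs_den_mul_sub_num_mul_den_succ_le (hnt (j + 1))
    refine ⟨q₁, -p, q₀, -p₀, ?_, ?_, ?_, ?_, ?_⟩
    · rw [← hq₁, hi, abs_of_nonneg q.cast_nonneg]
    · rw [← hq₀, ← hi, abs_of_nonneg GenContFract.zero_le_of_den]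
      exact GenContFract.of_den_mono
    · rw [Int.cast_neg, ← sub_eq_add_neg, ← hq₁, ← hp, ← hi]
      exact (mul_le_mul_of_nonneg_left GenContFract.of_den_mono (abs_nonneg _)).trans hj₁
    · rwa [Int.cast_neg, ← sub_eq_add_neg, ← hq₀, ← hp₀, ← hi]
    · intro h0
      have : ((q₁ * -p₀ - -p * q₀ : ℤ) : ℝ) = -(-1) ^ (j + 1) := by
        push_cast
        rw [← hp, ← hq₁, ← hp₀, ← hq₀, ← hdet]
        ring
      rw [h0, Int.cast_zero, zero_eq_neg] at this
      exact absurd this (by simp)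

section Approximation

variable {ξ x : ℝ} {n : ℕ}

theorem hasBinomialCoeffBound_taylor_pow_mul_pow (hx : 0 < x) {a b c d : ℝ} (ha : |a| ≤ x)
    (hc : |c| ≤ x) (hab : |a * ξ + b| * x ≤ 1) (hcd : |c * ξ + d| * x ≤ 1) {j : ℕ} (hj : j ≤ n) :
    HasBinomialCoeffBound x n (taylor ξ ((C a * X + C b) ^ j * (C c * X + C d) ^ (n - j))) := by
  have htaylor (a b : ℝ) : taylor ξ (C a * X + C b) = C a * X + C (a * ξ + b) := by
    rw [map_add, taylor_mul, taylor_C, taylor_C, taylor_X, C_add, C_mul]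
    ring
  rw [taylor_mul, taylor_pow, taylor_pow, htaylor, htaylor]
  have := ((hasBinomialCoeffBound_C_mul_X_add_C hx ha hab).pow hx j).mul hx
    ((hasBinomialCoeffBound_C_mul_X_add_C hx hc hcd).pow hx (n - j))
  rwa [one_mul, one_mul, Nat.add_sub_cancel' hj] at this

theorem exists_int_poly_taylor_coeff_near {a b c d : ℤ} (hx : 0 < x) (ha : |(a : ℝ)| ≤ x)
    (hc : |(c : ℝ)| ≤ x) (hab : |a * ξ + b| * x ≤ 1) (hcd : |c * ξ + d| * x ≤ 1)
    (hdet : a * d - b * c ≠ 0) {F : ℝ[X]} (hF : F.natDegree ≤ n) :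
    ∃ R : ℤ[X], R.natDegree ≤ n ∧ ∀ k,
      |(taylor ξ (R.map (Int.castRingHom ℝ) - F)).coeff k| ≤
        (n + 1) / 2 * n.choose k * x ^ (2 * (k : ℤ) - n) := by
  set g : Fin (n + 1) → ℤ[X] := fun j => (C a * X + C b) ^ (j : ℕ) * (C c * X + C d) ^ (n - j)
  have hg (j : Fin (n + 1)) : (g j).map (Int.castRingHom ℝ) =
      (C (a : ℝ) * X + C (b : ℝ)) ^ (j : ℕ) * (C (c : ℝ) * X + C (d : ℝ)) ^ (n - j) := by
    simp [g]
  have hdetℝ : (a : ℝ) * d - b * c ≠ 0 := by exact_mod_cast hdet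
  have hFspan : F ∈ homogeneousSpan (C (a : ℝ) * X + C (b : ℝ)) (C (c : ℝ) * X + C (d : ℝ)) n :=
    degreeLE_le_homogeneousSpan hdetℝ n
      (mem_degreeLE.2 (degree_le_natDegree.trans (by exact_mod_cast hF)))
  obtain ⟨m, e, he, hFe⟩ := exists_int_add_abs_le_half_of_mem_span hFspan
  refine ⟨∑ j, C (m j) * g j, ?_, fun k => ?_⟩
  · refine natDegree_sum_le_of_forall_le _ _ fun j _ => (natDegree_C_mul_le _ _).trans ?_
    refine natDegree_mul_le.trans ?_
    have hj : (j : ℕ) ≤ n := Nat.lt_succ_iff.1 j.2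
    calc _ ≤ (j : ℕ) * 1 + (n - j) * 1 := add_le_add
            (natDegree_pow_le_of_le _ natDegree_linear_le)
            (natDegree_pow_le_of_le _ natDegree_linear_le)
      _ = n := by rw [mul_one, mul_one, Nat.add_sub_cancel' hj]
  · have hdiff : (∑ j, C (m j) * g j).map (Int.castRingHom ℝ) - F =
        -∑ j, e j • ((C (a : ℝ) * X + C (b : ℝ)) ^ (j : ℕ) *
          (C (c : ℝ) * X + C (d : ℝ)) ^ (n - j)) := by
      rw [hFe, Polynomial.map_sum]
      simp only [Polynomial.map_mul, hg, eq_intCast, Polynomial.map_intCast, add_smul,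
        sum_add_distrib, smul_eq_C_mul, C_eq_intCast]
      ring
    rw [hdiff, map_neg, coeff_neg, abs_neg, map_sum, finsetSum_coeff]
    calc _ ≤ ∑ j : Fin (n + 1), 1 / 2 * (n.choose k * x ^ (2 * (k : ℤ) - n)) := by
          refine (abs_sum_le_sum_abs _ _).trans (sum_le_sum fun j _ => ?_)
          rw [map_smul, coeff_smul, smul_eq_mul, abs_mul]
          exact mul_le_mul (he j) (hasBinomialCoeffBound_taylor_pow_mul_pow hx ha hc hab hcd
            (Nat.lt_succ_iff.1 j.2) k) (abs_nonneg _) (by norm_num)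
      _ = (n + 1) / 2 * n.choose k * x ^ (2 * (k : ℤ) - n) := by
          rw [sum_const, card_univ, Fintype.card_fin, nsmul_eq_mul]
          push_cast
          ring

theorem divDerivZ_X_pow_add_C_two_add_C_four_mul (T : ℝ[X]) (R : ℤ[X]) (k : ℕ) :
    divDerivZ ξ (X ^ n + C 2 + C 4 * R) k = T.coeff k + 4 * (taylor ξ
      (R.map (Int.castRingHom ℝ) - (1 / 4 : ℝ) • (taylor (-ξ) T - (X ^ n + C 2)))).coeff k := by
  have hmap : (X ^ n + C 2 + C 4 * R).map (Int.castRingHom ℝ) = taylor (-ξ) T +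
      (4 : ℝ) • (R.map (Int.castRingHom ℝ) - (1 / 4 : ℝ) • (taylor (-ξ) T - (X ^ n + C 2))) := by
    simp only [Polynomial.map_add, Polynomial.map_mul, Polynomial.map_pow, map_X, map_C,
      smul_sub, smul_smul]
    norm_num
    rw [smul_eq_C_mul]
    ring
  rw [divDerivZ, divDeriv, hmap, map_add, taylor_taylor, add_neg_cancel, taylor_zero,
    map_smul, coeff_add, coeff_smul, smul_eq_mul]

theorem exists_irreducible_of_independent_small_linear_forms {a b c d : ℤ}
    (hx : 0 < x) (hn : 0 < n) (ha : |(a : ℝ)| ≤ x) (hc : |(c : ℝ)| ≤ x)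
    (hab : |a * ξ + b| * x ≤ 1) (hcd : |c * ξ + d| * x ≤ 1) (hdet : a * d - b * c ≠ 0) :
    ∃ P : ℤ[X], P.natDegree = n ∧ Irreducible (P.map (Int.castRingHom ℚ)) ∧ ∀ k ≤ n,
      ((n : ℝ) + 1) * 2 ^ (n + 1) * x ^ (2 * (k : ℤ) - n) ≤ |divDerivZ ξ P k| ∧
      |divDerivZ ξ P k| ≤ 3 * (((n : ℝ) + 1) * 2 ^ (n + 1)) * x ^ (2 * (k : ℤ) - n) := by
  set c₅ : ℝ := ((n : ℝ) + 1) * 2 ^ (n + 1)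
  set T : ℝ[X] := ∑ i ∈ range (n + 1), C (2 * c₅ * x ^ (2 * (i : ℤ) - n)) * X ^ i
  -- `X ^ n + 2 + 4 F` has Taylor expansion `T` at `ξ`.
  set F : ℝ[X] := (1 / 4 : ℝ) • (taylor (-ξ) T - (X ^ n + C 2))
  have hF : F.natDegree ≤ n := by
    refine (natDegree_smul_le _ _).trans ((natDegree_sub_le_of_le ?_ ?_).trans_eq (max_self n))
    · rw [natDegree_taylor]
      exact natDegree_sum_le_of_forall_le _ _ fun i hi =>
        (natDegree_C_mul_X_pow_le _ _).trans (Nat.lt_succ_iff.1 (mem_range.1 hi))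
    · exact natDegree_add_le_of_degree_le (natDegree_X_pow_le n)
        ((natDegree_C 2).le.trans n.zero_le)
  obtain ⟨R, hR, hRF⟩ := exists_int_poly_taylor_coeff_near hx ha hc hab hcd hdet hF
  have hdeg := natDegree_X_pow_add_C_two_add_C_four_mul hn hR
  refine ⟨X ^ n + C 2 + C 4 * R, hdeg, ?_, fun k hk => ?_⟩
  · rw [← algebraMap_int_eq]
    exact (isEisensteinAt_X_pow_add_C_two_add_C_four_mul hn hR).irreducible_map_fraction_map
      ((Ideal.span_singleton_prime two_ne_zero).2 Int.prime_two) (by rw [hdeg]; exact hn)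
  have hT : T.coeff k = 2 * c₅ * x ^ (2 * (k : ℤ) - n) := by
    simp only [T, finsetSum_coeff, coeff_C_mul_X_pow, sum_ite_eq, mem_range,
      Nat.lt_succ_iff.2 hk, if_true]
  have hE : |4 * (taylor ξ (R.map (Int.castRingHom ℝ) - F)).coeff k| ≤
      c₅ * x ^ (2 * (k : ℤ) - n) := by
    rw [abs_mul, abs_of_pos four_pos]
    calc _ ≤ 4 * ((n + 1) / 2 * n.choose k * x ^ (2 * (k : ℤ) - n)) := by gcongr; exact hRF k
      _ ≤ 4 * ((n + 1) / 2 * 2 ^ n * x ^ (2 * (k : ℤ) - n)) := by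
        gcongr; exact_mod_cast Nat.choose_le_two_pow n k
      _ = c₅ * x ^ (2 * (k : ℤ) - n) := by ring
  have hpos : 0 < c₅ * x ^ (2 * (k : ℤ) - n) := by positivity
  obtain ⟨hE₁, hE₂⟩ := abs_le.1 hE
  rw [divDerivZ_X_pow_add_C_two_add_C_four_mul T, hT, abs_of_pos (by linarith)]
  constructor <;> linarith

end Approximation

/-- Existence of irreducible polynomials with controlled divided derivatives: if `q ≥ 1` is
the denominator of a convergent of the irrational number `ξ` and `c₅ = (n+1)·2^(n+1)`, then
there is a polynomial `P ∈ ℤ[T]` of degree `n`, irreducible over `ℚ`, with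
`c₅ q^(2k-n) ≤ |P^{[k]}(ξ)| ≤ 3 c₅ q^(2k-n)` for all `0 ≤ k ≤ n`. -/
theorem exists_irreducible_poly_controlled
    (ξ : ℝ) (hξ : Irrational ξ) (n : ℕ) (hn : 0 < n) (q : ℕ)
    (hq : IsConvergentDenom ξ q) :
    ∃ P : Polynomial ℤ, P.natDegree = n ∧ Irreducible (P.map (Int.castRingHom ℚ)) ∧
      ∀ k ≤ n,
        ((n : ℝ) + 1) * 2 ^ (n + 1) * (q : ℝ) ^ (2 * (k : ℝ) - n) ≤ |divDerivZ ξ P k| ∧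
        |divDerivZ ξ P k| ≤ 3 * (((n : ℝ) + 1) * 2 ^ (n + 1)) * (q : ℝ) ^ (2 * (k : ℝ) - n) := by
  obtain ⟨a, b, c, d, ha, hc, hab, hcd, hdet⟩ := hq.exists_independent_small_linear_forms hξ
  have hq0 : (0 : ℝ) < q := by exact_mod_cast hq.1
  obtain ⟨P, hdeg, hirr, hP⟩ :=
    exists_irreducible_of_independent_small_linear_forms hq0 hn ha hc hab hcd hdet
  refine ⟨P, hdeg, hirr, fun k hk => ?_⟩
  have hrpow : (q : ℝ) ^ (2 * (k : ℝ) - n) = (q : ℝ) ^ (2 * (k : ℤ) - n) := by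
    rw [← Real.rpow_intCast]
    push_cast
    rfl
  rw [hrpow]
  exact hP k hk
end
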